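/- Let R = R_L ∪ R_T be a linear+trans rule set, 𝕌P the set of pattern definitions computed by the internal rewriting step (Step 3) of the algorithm, and Π_P its Datalog translation. For every CQ Q over the original vocabulary, let Q⁺⁺ be obtained from Q by replacing every atom p(t₁,t₂) with p transitive by the atom p⁺(t₁,t₂). Then for every fact base F: if F, Π_P ⊨ Q⁺⁺, then F, R ⊨ Q. -/

import Mathlib

set_option autoImplicit false

/-! ## First-order vocabulary: terms, atoms, existential rules -/

/-- Terms: variables and constants, both indexed by natural numbers. -/
inductive FTerm where
  | var : ℕ → FTerm
  | const : ℕ → FTerm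
deriving DecidableEq

instance : Inhabited FTerm := ⟨.var 0⟩

def FTerm.equivSum : FTerm ≃ ℕ ⊕ ℕ where
  toFun t := match t with | .var n => .inl n | .const n => .inr n
  invFun s := match s with | .inl n => .var n | .inr n => .const n
  left_inv t := by cases t <;> rfl
  right_inv s := by cases s <;> rfl

instance : Primcodable FTerm := Primcodable.ofEquiv (ℕ ⊕ ℕ) FTerm.equivSum

/-- A (function-free) atom: a predicate applied to a list of terms. -/
structure FAtom where
  pred : ℕ
  args : List FTerm
deriving DecidableEq

def FAtom.equivProd : FAtom ≃ ℕ × List FTerm where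
  toFun a := (a.pred, a.args)
  invFun p := ⟨p.1, p.2⟩
  left_inv a := rfl
  right_inv p := rfl

instance : Primcodable FAtom := Primcodable.ofEquiv (ℕ × List FTerm) FAtom.equivProd

/-- An existential rule `B → H`, given by its body and head (finite conjunctions of atoms).
Variables occurring in the head but not in the body are (implicitly) existentially
quantified; all other variables are universally quantified. -/
structure ERule where
  body : List FAtom
  head : List FAtom
deriving DecidableEq

def ERule.equivProd : ERule ≃ List FAtom × List FAtom where
  toFun r := (r.body, r.head)
  invFun p := ⟨p.1, p.2⟩
  left_inv r := rfl
  right_inv p := rfl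

instance : Primcodable ERule := Primcodable.ofEquiv (List FAtom × List FAtom) ERule.equivProd

/-! ## Semantics -/

/-- A first-order interpretation. -/
structure Interp where
  Dom : Type
  inh : Nonempty Dom
  rel : ℕ → List Dom → Prop
  cst : ℕ → Dom

def FTerm.eval (I : Interp) (ν : ℕ → I.Dom) : FTerm → I.Dom
  | .var n => ν n
  | .const n => I.cst n

def FAtom.sat (I : Interp) (ν : ℕ → I.Dom) (a : FAtom) : Prop :=
  I.rel a.pred (a.args.map (FTerm.eval I ν))

/-- Satisfaction of a Boolean conjunctive query (existential closure of a conjunction). -/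
def satCQ (I : Interp) (Q : List FAtom) : Prop := ∃ ν, ∀ a ∈ Q, a.sat I ν

def satFacts (I : Interp) (F : List FAtom) : Prop := ∀ ν, ∀ a ∈ F, a.sat I ν

def atomsVars (l : List FAtom) : Set ℕ := {v | ∃ a ∈ l, FTerm.var v ∈ a.args}
def atomsTerms (l : List FAtom) : Set FTerm := {t | ∃ a ∈ l, t ∈ a.args}
def atomsPreds (l : List FAtom) : Set ℕ := {q | ∃ a ∈ l, a.pred = q}
def rulesPreds (Rs : List ERule) : Set ℕ := {q | ∃ r ∈ Rs, q ∈ atomsPreds (r.body ++ r.head)}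
def atomsConsts (l : List FAtom) : Set ℕ := {c | FTerm.const c ∈ atomsTerms l}

/-- Frontier variables of a rule. -/
def ERule.frontierV (R : ERule) : Set ℕ := atomsVars R.body ∩ atomsVars R.head
/-- Existential variables of a rule. -/
def ERule.exV (R : ERule) : Set ℕ := atomsVars R.head \ atomsVars R.body

def ERule.sat (I : Interp) (R : ERule) : Prop :=
  ∀ ν, (∀ a ∈ R.body, a.sat I ν) →
    ∃ ν', (∀ v ∈ atomsVars R.body, ν' v = ν v) ∧ ∀ a ∈ R.head, a.sat I ν'

/-- First-order entailment of a Boolean CQ from a knowledge base. -/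
def entails (F : List FAtom) (Rs : List ERule) (Q : List FAtom) : Prop :=
  ∀ I : Interp, satFacts I F → (∀ r ∈ Rs, r.sat I) → satCQ I Q

/-- First-order entailment of a union of Boolean CQs. -/
def entailsUCQ (F : List FAtom) (Rs : List ERule) (Qs : List (List FAtom)) : Prop :=
  ∀ I : Interp, satFacts I F → (∀ r ∈ Rs, r.sat I) → ∃ Q ∈ Qs, satCQ I Q

def FAtom.isGround (a : FAtom) : Prop := ∀ t ∈ a.args, ∃ c, t = FTerm.const c
def isFactBase (F : List FAtom) : Prop := ∀ a ∈ F, a.isGround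

/-! ## Substitutions and piece-unifiers -/

def FTerm.subst (σ : ℕ → FTerm) : FTerm → FTerm
  | .var n => σ n
  | .const n => .const n

def FAtom.subst (σ : ℕ → FTerm) (a : FAtom) : FAtom := ⟨a.pred, a.args.map (FTerm.subst σ)⟩

/-- A piece-unifier of a CQ `Q` with a rule `R`, presented by a unifying substitution `σ`
(obtained from the admissible partition of the terms of `piece ∪ hpiece`):
`σ(piece) = σ(hpiece)` and every term merged with an existential variable of `R`
is a variable of the piece not occurring in the rest of `Q`. -/
structure PieceUnifier (Q : List FAtom) (R : ERule) where
  piece : List FAtom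
  hpiece : List FAtom
  σ : ℕ → FTerm
  piece_ne : piece ≠ []
  piece_sub : ∀ a ∈ piece, a ∈ Q
  hpiece_sub : ∀ a ∈ hpiece, a ∈ R.head
  unif : {x : FAtom | ∃ b ∈ piece, x = b.subst σ} = {x : FAtom | ∃ b ∈ hpiece, x = b.subst σ}
  exCond : ∀ z ∈ R.exV, ∀ t ∈ atomsTerms (piece ++ hpiece),
      FTerm.subst σ t = σ z → t ≠ FTerm.var z →
      ∃ v, t = FTerm.var v ∧ FTerm.var v ∈ atomsTerms piece ∧
        FTerm.var v ∉ atomsTerms (Q.filter (fun a => decide (a ∉ piece)))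

def pieceUnifiable (Q : List FAtom) (R : ERule) : Prop := Nonempty (PieceUnifier Q R)

/-- `R₂` depends on `R₁` if there is a piece-unifier of the body of `R₂` with the head of `R₁`. -/
def ruleDependsOn (R₂ R₁ : ERule) : Prop := pieceUnifiable R₂.body R₁

/-- A rule set is aGRD if its graph of rule dependencies (edge from `R₁` to `R₂`
whenever `R₂` depends on `R₁`) is acyclic. -/
def isAGRD (Rs : List ERule) : Prop :=
  ∀ r ∈ Rs, ¬ Relation.TransGen (fun r₁ r₂ => r₁ ∈ Rs ∧ r₂ ∈ Rs ∧ ruleDependsOn r₂ r₁) r r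

/-- The (classical) direct rewriting of `Q` with `R` w.r.t. a piece-unifier `μ`
is `σ(Q ∖ piece) ∪ σ(body R)` (as a set of atoms). -/
def directRewriting (Q Q' : List FAtom) (R : ERule) : Prop :=
  ∃ μ : PieceUnifier Q R,
    {x : FAtom | x ∈ Q'} =
      {x | ∃ b ∈ Q.filter (fun a => decide (a ∉ μ.piece)), x = b.subst μ.σ} ∪
      {x | ∃ b ∈ R.body, x = b.subst μ.σ}

/-- `Q'` is a rewriting of `Q` w.r.t. the rule set `Rs`: a finite sequence of direct rewritings. -/
def isRewriting (Rs : List ERule) (Q Q' : List FAtom) : Prop :=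
  Relation.ReflTransGen (fun q q' => ∃ r ∈ Rs, directRewriting q q' r) Q Q'

/-! ## Transitivity and linear rules -/

/-- `R` is the transitivity rule `p(x,y) ∧ p(y,z) → p(x,z)` for predicate `p`. -/
def isTransitivityRuleOn (p : ℕ) (R : ERule) : Prop :=
  ∃ x y z : ℕ, x ≠ y ∧ y ≠ z ∧ x ≠ z ∧
    R.body = [⟨p, [.var x, .var y]⟩, ⟨p, [.var y, .var z]⟩] ∧
    R.head = [⟨p, [.var x, .var z]⟩]

def isTransitivityRule (R : ERule) : Prop := ∃ p, isTransitivityRuleOn p R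

/-- A canonical transitivity rule for predicate `p`. -/
def transRule (p : ℕ) : ERule :=
  ⟨[⟨p, [.var 0, .var 1]⟩, ⟨p, [.var 1, .var 2]⟩], [⟨p, [.var 0, .var 2]⟩]⟩

/-- A linear rule: single-atom body and no constants. -/
def isLinearRule (R : ERule) : Prop :=
  (∃ a, R.body = [a]) ∧ ∀ t ∈ atomsTerms (R.body ++ R.head), ∀ c, t ≠ FTerm.const c

/-! ## Patterns, pattern CQs and their instances -/

/-- An element of a pattern conjunctive query: an ordinary atom, a standard pattern
`P[t₁,t₂]`, or a repeatable pattern `P⁺[t₁,t₂]`.  Pattern names are naturals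
(we use the underlying transitive predicate as its own pattern name). -/
inductive PAtom where
  | atom : FAtom → PAtom
  | std : ℕ → FTerm → FTerm → PAtom
  | rep : ℕ → FTerm → FTerm → PAtom
deriving DecidableEq

/-- A pattern conjunctive query (PCQ). -/
abbrev PCQ := List PAtom

/-- A set of pattern definitions `P := a₁ | … | a_k`.  The special variables `#1`, `#2`
of definition atoms are represented by the variables `0` and `1`. -/
abbrev PDefs := List (ℕ × List FAtom)

def defAtoms (P : PDefs) (n : ℕ) : List FAtom := (List.lookup n P).getD []

def PAtom.terms : PAtom → List FTerm
  | .atom a => a.args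
  | .std _ t1 t2 => [t1, t2]
  | .rep _ t1 t2 => [t1, t2]

def pcqTerms (Q : PCQ) : Set FTerm := {t | ∃ p ∈ Q, t ∈ p.terms}
def pcqVars (Q : PCQ) : Set ℕ := {v | FTerm.var v ∈ pcqTerms Q}

def PAtom.subst (σ : ℕ → FTerm) : PAtom → PAtom
  | .atom a => .atom (a.subst σ)
  | .std n t1 t2 => .std n (t1.subst σ) (t2.subst σ)
  | .rep n t1 t2 => .rep n (t1.subst σ) (t2.subst σ)

/-- Instantiating a pattern-definition atom: `#1 ↦ t₁`, `#2 ↦ t₂`, and the remaining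
variables are renamed by `ρ`. -/
def instDefAtom (a : FAtom) (t1 t2 : FTerm) (ρ : ℕ → ℕ) : FAtom :=
  a.subst fun v => if v = 0 then t1 else if v = 1 then t2 else .var (ρ v)

/-- The successive pairs of endpoints of a chain from `t1` to `t2` through fresh
variables `xs`. -/
def chainTerms (t1 t2 : FTerm) : List ℕ → List (FTerm × FTerm)
  | [] => [(t1, t2)]
  | x :: rest => (t1, .var x) :: chainTerms (.var x) t2 rest

/-- All points of a chain from `t1` to `t2` through `xs`. -/
def chainPts (t1 t2 : FTerm) (xs : List ℕ) : List FTerm := t1 :: (xs.map FTerm.var ++ [t2])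

/-- Expansion data for one node of an instantiation tree: unexpanded (`leaf`),
a standard pattern expanded into a definition atom (`stdE`), or a repeatable pattern
expanded into a chain of standard patterns (with internal variables `xs`), each of which
may in turn be expanded into a definition atom (`repE`). -/
inductive PExp where
  | leaf : PExp
  | stdE : FAtom → (ℕ → ℕ) → PExp
  | repE : List ℕ → List (Option (FAtom × (ℕ → ℕ))) → PExp

def expandSlot (n : ℕ) (t1 t2 : FTerm) : Option (FAtom × (ℕ → ℕ)) → PAtom
  | none => .std n t1 t2
  | some (a, ρ) => .atom (instDefAtom a t1 t2 ρ)

def expandNode : PAtom → PExp → PCQ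
  | .std n t1 t2, .stdE a ρ => [.atom (instDefAtom a t1 t2 ρ)]
  | .rep n t1 t2, .repE xs es =>
      ((chainTerms t1 t2 xs).zip es).map fun pe => expandSlot n pe.1.1 pe.1.2 pe.2
  | p, _ => [p]

def PExpWF (P : PDefs) : PAtom → PExp → Prop
  | .atom _, e => e = .leaf
  | .std n _ _, e => e = .leaf ∨ ∃ a ρ, e = .stdE a ρ ∧ a ∈ defAtoms P n ∧ Function.Injective ρ
  | .rep n _ _, e => e = .leaf ∨ ∃ xs es, e = .repE xs es ∧ es.length = xs.length + 1 ∧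
      xs.Nodup ∧ ∀ o ∈ es, ∀ a ρ, o = some (a, ρ) → a ∈ defAtoms P n ∧ Function.Injective ρ

def FAtom.varList (a : FAtom) : List ℕ :=
  a.args.filterMap fun t => match t with | .var v => some v | .const _ => none

def slotNewVars : Option (FAtom × (ℕ → ℕ)) → List ℕ
  | none => []
  | some (a, ρ) => (a.varList.filter fun v => decide (v ≠ 0 ∧ v ≠ 1)).map ρ

def PExp.newVars : PExp → List ℕ
  | .leaf => []
  | .stdE a ρ => (a.varList.filter fun v => decide (v ≠ 0 ∧ v ≠ 1)).map ρ
  | .repE xs es => xs ++ es.flatMap slotNewVars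

/-- An instantiation of the PCQ `Q` w.r.t. the pattern definitions `P`:
a well-formed choice of expansions for the elements of `Q`, whose freshly introduced
variables are pairwise distinct and do not occur in `Q`. -/
structure Instn (P : PDefs) (Q : PCQ) where
  exps : List PExp
  len : exps.length = Q.length
  wf : ∀ (i : ℕ) (hq : i < Q.length) (he : i < exps.length),
    PExpWF P (Q.get ⟨i, hq⟩) (exps.get ⟨i, he⟩)
  fresh_nodup : ((exps.map PExp.newVars).flatten).Nodup
  fresh : ∀ v ∈ (exps.map PExp.newVars).flatten, v ∉ pcqVars Q

/-- The instance associated with an instantiation. -/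
def Instn.result {P : PDefs} {Q : PCQ} (T : Instn P Q) : PCQ :=
  (Q.zip T.exps).flatMap fun pe => expandNode pe.1 pe.2

def isFullPCQ (Q : PCQ) : Prop := ∀ p ∈ Q, ∃ a, p = PAtom.atom a

def IsInstanceOf (P : PDefs) (Q Q' : PCQ) : Prop := ∃ T : Instn P Q, T.result = Q'
def IsFullInstanceOf (P : PDefs) (Q Q' : PCQ) : Prop := IsInstanceOf P Q Q' ∧ isFullPCQ Q'

def PCQ.toCQ (Q : PCQ) : List FAtom :=
  Q.filterMap fun p => match p with | .atom a => some a | _ => none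

/-! ## Datalog and UCQ translations -/

/-- The Datalog translation `Π_P` of a set of pattern definitions: for each definition of
pattern `P` (for transitive predicate `p`), the transitivity rule for the fresh predicate
`p⁺ = plus p` and one rule `aᵢ → p⁺(#1,#2)` per definition atom. -/
def datalogOfDefs (plus : ℕ → ℕ) (P : PDefs) : List ERule :=
  P.flatMap fun pd =>
    transRule (plus pd.1) :: pd.2.map fun a => ⟨[a], [⟨plus pd.1, [.var 0, .var 1]⟩]⟩

/-- The CQ obtained from a PCQ by replacing each pattern `P⁺[t₁,t₂]` (resp. `P[t₁,t₂]`)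
by the atom `p⁺(t₁,t₂)`. -/
def pcqToCQPlus (plus : ℕ → ℕ) (Q : PCQ) : List FAtom :=
  Q.map fun p => match p with
    | .atom a => a
    | .std n t1 t2 => ⟨plus n, [t1, t2]⟩
    | .rep n t1 t2 => ⟨plus n, [t1, t2]⟩

/-- The initial pattern definitions: `P := p(#1,#2)` for each transitive predicate `p`. -/
def initDefs (tp : List ℕ) : PDefs := tp.map fun p => (p, [⟨p, [.var 0, .var 1]⟩])

/-- `Q⁺`: replace every atom `p(t₁,t₂)` with `p` transitive by the repeatable
pattern `P⁺[t₁,t₂]`. -/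
def toPCQ (tp : List ℕ) (Q : List FAtom) : PCQ :=
  Q.map fun a =>
    if a.pred ∈ tp then
      match a.args with
      | [u, v] => PAtom.rep a.pred u v
      | _ => PAtom.atom a
    else PAtom.atom a

/-- `Q⁺⁺`: replace every atom `p(t₁,t₂)` with `p` transitive by `p⁺(t₁,t₂)`. -/
def toPlusCQ (plus : ℕ → ℕ) (tp : List ℕ) (Q : List FAtom) : List FAtom :=
  Q.map fun a => if a.pred ∈ tp then ⟨plus a.pred, a.args⟩ else a

/-! ## Rules of `R_L⁺` -/

/-- A rule of `R_L⁺`: the body is a single atom or a single repeatable pattern. -/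
structure PRule where
  pbody : PAtom
  head : List FAtom

def PAtom.varList (p : PAtom) : List ℕ :=
  p.terms.filterMap fun t => match t with | .var v => some v | .const _ => none

def PRule.exV (R : PRule) : Set ℕ := atomsVars R.head \ {v | v ∈ R.pbody.varList}

/-- The `R_L⁺` translation of a linear rule: a transitive body atom is replaced by the
corresponding repeatable pattern. -/
def toPRule (tp : List ℕ) (R : ERule) : PRule :=
  match R.body with
  | [a] =>
    ⟨if a.pred ∈ tp then
        match a.args with
        | [u, v] => PAtom.rep a.pred u v
        | _ => PAtom.atom a
      else PAtom.atom a, R.head⟩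
  | _ => ⟨PAtom.atom ⟨0, []⟩, R.head⟩

def pruleNoConst (R : PRule) : Prop :=
  (∀ t ∈ R.pbody.terms, ∀ c, t ≠ FTerm.const c) ∧
  ∀ t ∈ atomsTerms R.head, ∀ c, t ≠ FTerm.const c

/-- `R` is (the `R_L⁺` version of) a linear rule w.r.t. the transitive predicates `tp`. -/
def isRLPlusRule (tp : List ℕ) (R : PRule) : Prop :=
  pruleNoConst R ∧ (∃ h, R.head = [h]) ∧
  ((∃ a, R.pbody = PAtom.atom a ∧ a.pred ∉ tp) ∨
   (∃ p t1 t2, R.pbody = PAtom.rep p t1 t2 ∧ p ∈ tp))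

/-! ## Unifiers of PCQs -/

def pcqRemove (ctx : PCQ) (Qp : List FAtom) : PCQ :=
  ctx.filter fun p => decide (∀ a ∈ Qp, p ≠ PAtom.atom a)

/-- Condition 2 of piece-unifiers, relative to a PCQ context `ctx`:
every term merged with an existential variable of `R` is a variable of the unified part
`Qp` that does not occur in the rest of `ctx`. -/
def exCondOn (R : PRule) (σ : ℕ → FTerm) (ctx : PCQ) (Qp Hp : List FAtom) : Prop :=
  ∀ z ∈ R.exV, ∀ t ∈ atomsTerms (Qp ++ Hp),
    FTerm.subst σ t = σ z → t ≠ FTerm.var z →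
    ∃ v, t = FTerm.var v ∧ FTerm.var v ∈ atomsTerms Qp ∧
      FTerm.var v ∉ pcqTerms (pcqRemove ctx Qp)

/-- A (single-piece) unifier of the PCQ `ctx` with the rule `R`: a piece-unifier whose
unified query atoms `Qp` are ordinary atoms of `ctx`. -/
structure CtxUnifier (ctx : PCQ) (R : PRule) where
  Qp : List FAtom
  Hp : List FAtom
  σ : ℕ → FTerm
  Qp_ne : Qp ≠ []
  Qp_sub : ∀ a ∈ Qp, PAtom.atom a ∈ ctx
  Hp_sub : ∀ a ∈ Hp, a ∈ R.head
  unif : {x : FAtom | ∃ b ∈ Qp, x = b.subst σ} = {x : FAtom | ∃ b ∈ Hp, x = b.subst σ}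
  exCond : exCondOn R σ ctx Qp Hp
  singlePiece : ¬ ∃ Qs : List FAtom, Qs ≠ [] ∧ (∀ a ∈ Qs, a ∈ Qp) ∧
      {a : FAtom | a ∈ Qs} ⊂ {a : FAtom | a ∈ Qp} ∧ exCondOn R σ ctx Qs Hp

/-- A unifier of the PCQ `Q` with `R`: a unifier of one of its instances. -/
structure PUnifier (P : PDefs) (Q : PCQ) (R : PRule) where
  T : Instn P Q
  u : CtxUnifier T.result R

/-- The atoms produced at the successive slots of an expanded repeatable pattern. -/
def slotAtoms (n : ℕ) (t1 t2 : FTerm) (xs : List ℕ)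
    (es : List (Option (FAtom × (ℕ → ℕ)))) : List (Option FAtom) :=
  ((chainTerms t1 t2 xs).zip es).map fun pe =>
    pe.2.map fun aρ => instDefAtom aρ.1 pe.1.1 pe.1.2 aρ.2

/-- `μ` is internal to the repeatable pattern occurring at position `i` of `Q`, with
relevant slots `[s,e)`; the external terms are the chain points at `s` and `e`, and they
are neither unified together nor with an existential variable of `R`. -/
def PUnifier.internalData {P : PDefs} {Q : PCQ} {R : PRule} (μ : PUnifier P Q R)
    (i n : ℕ) (t1 t2 : FTerm) (xs : List ℕ) (es : List (Option (FAtom × (ℕ → ℕ))))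
    (s e : ℕ) : Prop :=
  ∃ (hq : i < Q.length) (he : i < μ.T.exps.length),
    Q.get ⟨i, hq⟩ = PAtom.rep n t1 t2 ∧
    μ.T.exps.get ⟨i, he⟩ = PExp.repE xs es ∧
    (∀ a ∈ μ.u.Qp, some a ∈ slotAtoms n t1 t2 xs es) ∧
    s < e ∧ e ≤ xs.length + 1 ∧
    (∀ j < xs.length + 1,
      (∃ a ∈ μ.u.Qp, (slotAtoms n t1 t2 xs es)[j]? = some (some a)) ↔ (s ≤ j ∧ j < e)) ∧
    FTerm.subst μ.u.σ ((chainPts t1 t2 xs).getD s default) ≠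
      FTerm.subst μ.u.σ ((chainPts t1 t2 xs).getD e default) ∧
    ∀ z ∈ R.exV,
      FTerm.subst μ.u.σ ((chainPts t1 t2 xs).getD s default) ≠ μ.u.σ z ∧
      FTerm.subst μ.u.σ ((chainPts t1 t2 xs).getD e default) ≠ μ.u.σ z

def PUnifier.isInternal {P : PDefs} {Q : PCQ} {R : PRule} (μ : PUnifier P Q R) : Prop :=
  ∃ i n t1 t2 xs es s e, μ.internalData i n t1 t2 xs es s e

def PUnifier.isExternal {P : PDefs} {Q : PCQ} {R : PRule} (μ : PUnifier P Q R) : Prop :=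
  ¬ μ.isInternal

/-! ## Instantiations of interest -/

/-- An instantiation of interest w.r.t. a rule with head predicate `p` of arity `arity`:
every repeatable pattern whose definition contains `n_i > 0` atoms with predicate `p` is
expanded into `k` standard patterns (`0 < k ≤ min(arity, n_i) + 2`), each of which is
expanded into a definition atom with predicate `p`; other patterns are left unexpanded. -/
def IsIOI (P : PDefs) (p arity : ℕ) {Q : PCQ} (T : Instn P Q) : Prop :=
  ∀ (i : ℕ) (hq : i < Q.length) (he : i < T.exps.length),
    (∀ n t1 t2, Q.get ⟨i, hq⟩ = PAtom.std n t1 t2 → T.exps.get ⟨i, he⟩ = PExp.leaf) ∧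
    (∀ n t1 t2, Q.get ⟨i, hq⟩ = PAtom.rep n t1 t2 →
      (((defAtoms P n).filter fun a => decide (a.pred = p)) = [] →
        T.exps.get ⟨i, he⟩ = PExp.leaf) ∧
      (((defAtoms P n).filter fun a => decide (a.pred = p)) ≠ [] →
        ∃ xs es, T.exps.get ⟨i, he⟩ = PExp.repE xs es ∧
          xs.length + 1 ≤
            min arity ((defAtoms P n).filter fun a => decide (a.pred = p)).length + 2 ∧
          ∀ o ∈ es, ∃ a ρ, o = some (a, ρ) ∧ a.pred = p))

def IsInstanceOfInterest (P : PDefs) (p arity : ℕ) (Q Q' : PCQ) : Prop :=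
  ∃ T : Instn P Q, IsIOI P p arity T ∧ T.result = Q'

/-- `μ'` is more general than `μ`. -/
def moreGeneralU {P : PDefs} {Q : PCQ} {R : PRule} (μ' μ : PUnifier P Q R) : Prop :=
  ∃ h : ℕ → FTerm,
    (∀ a ∈ μ'.u.Qp, ∃ b ∈ μ.u.Qp, (a.subst μ'.u.σ).subst h = b.subst μ.u.σ) ∧
    ∀ x ∈ atomsTerms (μ'.u.Qp ++ R.head), ∀ y ∈ atomsTerms (μ'.u.Qp ++ R.head),
      FTerm.subst μ'.u.σ x = FTerm.subst μ'.u.σ y →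
      FTerm.subst μ.u.σ (FTerm.subst h x) = FTerm.subst μ.u.σ (FTerm.subst h y)

/-! ## Rewriting operations, isomorphisms, homomorphisms -/

/-- The classical direct rewriting `σ(ctx ∖ Qp) ∪ σ(B)` of a PCQ with a rule of `R_L⁺`. -/
def classicalRewritePCQ (ctx : PCQ) (Qp : List FAtom) (σ : ℕ → FTerm) (R : PRule) : PCQ :=
  (pcqRemove ctx Qp).map (PAtom.subst σ) ++ [R.pbody.subst σ]

def CQIso (Q1 Q2 : List FAtom) : Prop :=
  ∃ f : ℕ → ℕ, Function.Bijective f ∧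
    {a : FAtom | a ∈ Q2} = {a | ∃ b ∈ Q1, a = b.subst fun v => FTerm.var (f v)}

def PCQIso (Q1 Q2 : PCQ) : Prop :=
  ∃ f : ℕ → ℕ, Function.Bijective f ∧
    {p : PAtom | p ∈ Q2} = {p | ∃ q ∈ Q1, p = q.subst fun v => FTerm.var (f v)}

def CQHom (Q1 Q2 : List FAtom) : Prop := ∃ σ, ∀ a ∈ Q1, a.subst σ ∈ Q2

/-- `(Q1,P1)` is more general than `(Q2,P2)`. -/
def PCQMoreGeneral (P1 : PDefs) (Q1 : PCQ) (P2 : PDefs) (Q2 : PCQ) : Prop :=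
  ∀ Q2', IsFullInstanceOf P2 Q2 Q2' →
    ∃ Q1', IsFullInstanceOf P1 Q1 Q1' ∧ CQHom Q1'.toCQ Q2'.toCQ

/-! ## Minimally-unifiable instances and external direct rewritings of PCQs -/

inductive RepCase where
  | keep | c1 | c2 | c3 | c4
deriving DecidableEq

/-- A fully expanded chain for pattern `n` from `u` to `v`, producing the atoms `X`. -/
def IsChainExp (P : PDefs) (n : ℕ) (u v : FTerm) (X : List FAtom) : Prop :=
  ∃ (xs : List ℕ) (es : List (Option (FAtom × (ℕ → ℕ)))),
    es.length = xs.length + 1 ∧ (∀ o ∈ es, o ≠ none) ∧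
    (∀ o ∈ es, ∀ a ρ, o = some (a, ρ) → a ∈ defAtoms P n ∧ Function.Injective ρ) ∧
    X = ((chainTerms u v xs).zip es).filterMap fun pe =>
      pe.2.map fun aρ => instDefAtom aρ.1 pe.1.1 pe.1.2 aρ.2

/-- Replacement of one element of a PCQ in a minimally-unifiable instance:
either it is kept, or (for a repeatable pattern used by the unifier) it is replaced
following one of the four cases; `X` is the chain of atoms used by the unifier. -/
inductive ElemRepl (P : PDefs) : PAtom → RepCase → PCQ → List FAtom → Prop
  | keep (p : PAtom) : ElemRepl P p .keep [p] []
  | case1 (n : ℕ) (t1 t2 : FTerm) (x1 x2 : ℕ) (X : List FAtom) :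
      IsChainExp P n (.var x1) (.var x2) X →
      ElemRepl P (.rep n t1 t2) .c1
        (PAtom.rep n t1 (.var x1) :: X.map PAtom.atom ++ [PAtom.rep n (.var x2) t2]) X
  | case2 (n : ℕ) (t1 t2 : FTerm) (x1 : ℕ) (X : List FAtom) :
      IsChainExp P n (.var x1) t2 X →
      ElemRepl P (.rep n t1 t2) .c2 (PAtom.rep n t1 (.var x1) :: X.map PAtom.atom) X
  | case3 (n : ℕ) (t1 t2 : FTerm) (x2 : ℕ) (X : List FAtom) :
      IsChainExp P n t1 (.var x2) X →
      ElemRepl P (.rep n t1 t2) .c3 (X.map PAtom.atom ++ [PAtom.rep n (.var x2) t2]) X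
  | case4 (n : ℕ) (t1 t2 : FTerm) (X : List FAtom) :
      IsChainExp P n t1 t2 X →
      ElemRepl P (.rep n t1 t2) .c4 (X.map PAtom.atom) X

/-- A minimally-unifiable instance of `(Q,P)` w.r.t. an external unifier with rule `R`,
together with the unifier itself. -/
structure MinUnif (P : PDefs) (Q : PCQ) (R : PRule) where
  repl : List (RepCase × PCQ × List FAtom)
  len : repl.length = Q.length
  elemOK : ∀ (i : ℕ) (hq : i < Q.length) (hr : i < repl.length),
    ElemRepl P (Q.get ⟨i, hq⟩) (repl.get ⟨i, hr⟩).1 (repl.get ⟨i, hr⟩).2.1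
      (repl.get ⟨i, hr⟩).2.2
  u : CtxUnifier ((repl.map fun c => c.2.1).flatten) R
  usedAll : ∀ c ∈ repl, ∀ a ∈ c.2.2, a ∈ u.Qp
  onlyX : ∀ a ∈ u.Qp, (∃ c ∈ repl, a ∈ c.2.2) ∨ PAtom.atom a ∈ Q

def MinUnif.Qm {P : PDefs} {Q : PCQ} {R : PRule} (M : MinUnif P Q R) : PCQ :=
  (M.repl.map fun c => c.2.1).flatten

def MinUnif.caseAt {P : PDefs} {Q : PCQ} {R : PRule} (M : MinUnif P Q R)
    (i : ℕ) (h : i < Q.length) : RepCase :=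
  (M.repl.get ⟨i, lt_of_lt_of_eq h M.len.symm⟩).1

def MinUnif.XAt {P : PDefs} {Q : PCQ} {R : PRule} (M : MinUnif P Q R)
    (i : ℕ) (h : i < Q.length) : List FAtom :=
  (M.repl.get ⟨i, lt_of_lt_of_eq h M.len.symm⟩).2.2

/-- The direct rewriting of the PCQ determined by a minimally-unifiable instance. -/
def MinUnif.rewrite {P : PDefs} {Q : PCQ} {R : PRule} (M : MinUnif P Q R) : PCQ :=
  classicalRewritePCQ M.Qm M.u.Qp M.u.σ R

/-- `Q'` is a direct rewriting of `Q` w.r.t. `P` and `R`. -/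
def IsDirectPCQRewriting (P : PDefs) (R : PRule) (Q Q' : PCQ) : Prop :=
  ∃ M : MinUnif P Q R, Q' = M.rewrite

/-- First kind of excluded minimally-unifiable instance. -/
def MinUnif.excludedA {P : PDefs} {Q : PCQ} {R : PRule} (M : MinUnif P Q R) : Prop :=
  ∃ (i : ℕ) (hq : i < Q.length), ∃ n t1 t2,
    Q.get ⟨i, hq⟩ = PAtom.rep n t1 t2 ∧
    (∀ a ∈ M.u.Qp, a ∈ M.XAt i hq) ∧
    FTerm.subst M.u.σ t1 = FTerm.subst M.u.σ t2 ∧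
    (M.caseAt i hq = RepCase.c1 ∨ M.caseAt i hq = RepCase.c2 ∨ M.caseAt i hq = RepCase.c3)

def occursOnlyAsRepSnd (Q : PCQ) (t : FTerm) : Prop :=
  t ∈ pcqTerms Q ∧ ∀ p ∈ Q, t ∈ p.terms → ∃ n t1, p = PAtom.rep n t1 t ∧ t1 ≠ t

def occursOnlyAsRepFst (Q : PCQ) (t : FTerm) : Prop :=
  t ∈ pcqTerms Q ∧ ∀ p ∈ Q, t ∈ p.terms → ∃ n t2, p = PAtom.rep n t t2 ∧ t2 ≠ t

/-- Second kind of excluded minimally-unifiable instance. -/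
def MinUnif.excludedB {P : PDefs} {Q : PCQ} {R : PRule} (M : MinUnif P Q R) : Prop :=
  (∀ a ∈ M.u.Qp, ∃ c ∈ M.repl, a ∈ c.2.2) ∧
  ∃ t : FTerm, (∃ z ∈ R.exV, FTerm.subst M.u.σ t = M.u.σ z) ∧
    ((occursOnlyAsRepSnd Q t ∧ ∀ (i : ℕ) (hq : i < Q.length), ∀ n t1,
        Q.get ⟨i, hq⟩ = PAtom.rep n t1 t → M.caseAt i hq = RepCase.c2) ∨
     (occursOnlyAsRepFst Q t ∧ ∀ (i : ℕ) (hq : i < Q.length), ∀ n t2,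
        Q.get ⟨i, hq⟩ = PAtom.rep n t t2 → M.caseAt i hq = RepCase.c3))

def MinUnif.nonExcluded {P : PDefs} {Q : PCQ} {R : PRule} (M : MinUnif P Q R) : Prop :=
  ¬ M.excludedA ∧ ¬ M.excludedB

/-! ## Direct rewritings of pattern definitions (internal rewriting) -/

def updateDef (P : PDefs) (n : ℕ) (new : List FAtom) : PDefs :=
  P.map fun pd => if pd.1 = n then (pd.1, pd.2 ++ new) else pd

def replExt (us ue : FTerm) (t : FTerm) : FTerm :=
  if t = us then .var 0 else if t = ue then .var 1 else t

def FAtom.mapTerms (f : FTerm → FTerm) (a : FAtom) : FAtom := ⟨a.pred, a.args.map f⟩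

def swap01 (t : FTerm) : FTerm :=
  if t = FTerm.var 0 then FTerm.var 1 else if t = FTerm.var 1 then FTerm.var 0 else t

/-- The atoms added to a pattern definition by an internal rewriting step: `B'` is
obtained from `σ(B)` by replacing the external terms by `#1`, `#2`; if `B'` is an atom it
is added itself, and if it is a repeatable pattern `S⁺[#1,#2]` (resp. `S⁺[#2,#1]`) the
atoms of `S`'s definition (resp. their `#1/#2`-swaps) are added. -/
def newAtomsFor (P : PDefs) (R : PRule) (σ : ℕ → FTerm) (us ue : FTerm) : List FAtom :=
  match R.pbody with
  | .atom a => [(a.subst σ).mapTerms (replExt us ue)]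
  | .rep s t1 t2 =>
      if replExt us ue (FTerm.subst σ t1) = FTerm.var 0 ∧
         replExt us ue (FTerm.subst σ t2) = FTerm.var 1
      then defAtoms P s
      else (defAtoms P s).map (FAtom.mapTerms swap01)
  | .std _ _ _ => []

/-- `P'` is a direct rewriting of the pattern definitions `P` w.r.t. pattern name `n` and
rule `R ∈ R_L⁺`: obtained from an internal unifier (with a substitution preserving the
external terms) of an instance of interest of `P⁺[x,y]` with `R`. -/
def IsDefRewriting (P : PDefs) (n : ℕ) (R : PRule) (P' : PDefs) : Prop :=
  ∃ hd : FAtom, R.head = [hd] ∧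
  ∃ μ : PUnifier P [PAtom.rep n (.var 0) (.var 1)] R,
    IsIOI P hd.pred hd.args.length μ.T ∧
    ∃ n' t1 t2 xs es s e, μ.internalData 0 n' t1 t2 xs es s e ∧
      FTerm.subst μ.u.σ ((chainPts t1 t2 xs).getD s default) =
        (chainPts t1 t2 xs).getD s default ∧
      FTerm.subst μ.u.σ ((chainPts t1 t2 xs).getD e default) =
        (chainPts t1 t2 xs).getD e default ∧
      P' = updateDef P n (newAtomsFor P R μ.u.σ
        ((chainPts t1 t2 xs).getD s default) ((chainPts t1 t2 xs).getD e default))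

/-! ## Saturations (the query rewriting algorithm) -/

/-- Isomorphism of pattern-definition atoms (fixing the special variables `#1`, `#2`). -/
def isoDefAtom (a b : FAtom) : Prop :=
  ∃ f : ℕ → ℕ, Function.Bijective f ∧ f 0 = 0 ∧ f 1 = 1 ∧
    b = a.subst fun v => FTerm.var (f v)

def DefStep (RL : List PRule) (P P' : PDefs) : Prop :=
  ∃ n R, R ∈ RL ∧ IsDefRewriting P n R P'

/-- `Pf` is the saturated set of pattern definitions computed by Step 3: reachable from
the initial definitions, and closed (up to isomorphism) under direct rewritings. -/
def IsSaturatedDefs (tp : List ℕ) (RL : List PRule) (Pf : PDefs) : Prop :=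
  Relation.ReflTransGen (DefStep RL) (initDefs tp) Pf ∧
  ∀ P', DefStep RL Pf P' → ∀ n, ∀ a ∈ defAtoms P' n, ∃ b ∈ defAtoms Pf n, isoDefAtom a b

def PCQStep (P : PDefs) (RL : List PRule) (Q Q' : PCQ) : Prop :=
  ∃ R ∈ RL, IsDirectPCQRewriting P R Q Q'

/-- `UQ` is the (possibly infinite) set of PCQs computed by Step 5: contains `Q0`, all
members reachable from `Q0`, and closed (up to isomorphism) under direct rewritings. -/
def IsSaturatedUQ (P : PDefs) (RL : List PRule) (Q0 : PCQ) (UQ : Set PCQ) : Prop :=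
  Q0 ∈ UQ ∧ (∀ Q ∈ UQ, Relation.ReflTransGen (PCQStep P RL) Q0 Q) ∧
  ∀ Q ∈ UQ, ∀ Q', PCQStep P RL Q Q' → ∃ Q'' ∈ UQ, PCQIso Q' Q''

/-- One non-excluded external direct rewriting step (the modified algorithm). -/
def PCQStepNE (P : PDefs) (RL : List PRule) (Q Q' : PCQ) : Prop :=
  ∃ R ∈ RL, ∃ M : MinUnif P Q R, M.nonExcluded ∧ Q' = M.rewrite

/-- A finite saturated set of PCQs for the modified (non-excluded) rewriting. -/
def IsSaturatedUQListNE (P : PDefs) (RL : List PRule) (Q0 : PCQ) (UQ : List PCQ) : Prop :=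
  Q0 ∈ UQ ∧ (∀ Q ∈ UQ, Relation.ReflTransGen (PCQStepNE P RL) Q0 Q) ∧
  ∀ Q ∈ UQ, ∀ Q', PCQStepNE P RL Q Q' → ∃ Q'' ∈ UQ, PCQIso Q' Q''

/-! ## Safety -/

/-- `q` is a specialization of the binary predicate `p` on positions `{I,J}`. -/
inductive IsSpec (RL : List ERule) (p : ℕ) : ℕ → Set ℕ → Set ℕ → Prop
  | direct (r : ERule) (q : ℕ) (u : List FTerm) (x y : ℕ) (I J : Set ℕ) :
      r ∈ RL → r.body = [⟨q, u⟩] → r.head = [⟨p, [.var x, .var y]⟩] → x ≠ y →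
      I = {i | u[i]? = some (.var x)} → I.Nonempty →
      J = {j | u[j]? = some (.var y)} → J.Nonempty →
      IsSpec RL p q I J
  | step (r : ERule) (q r' : ℕ) (u v : List FTerm) (K L I J : Set ℕ) :
      r ∈ RL → r.body = [⟨q, u⟩] → r.head = [⟨r', v⟩] →
      IsSpec RL p r' K L →
      I = {i | ∃ k ∈ K, ∃ t, v[k]? = some t ∧ u[i]? = some t} → I.Nonempty →
      J = {j | ∃ l ∈ L, ∃ t, v[l]? = some t ∧ u[j]? = some t} → J.Nonempty →
      IsSpec RL p q I J

/-- The safety condition for a linear+trans rule set (with transitive predicates `tp`). -/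
def isSafe (RL : List ERule) (tp : List ℕ) : Prop :=
  ∀ q : ℕ, (∃ p ∈ tp, ∃ I J, IsSpec RL p q I J) →
    ∃ i j : ℕ, i ≠ j ∧ ∀ p ∈ tp, ∀ I J, IsSpec RL p q I J →
      (i ∈ I ∧ j ∈ J) ∨ (i ∈ J ∧ j ∈ I)

/-! ## Miscellaneous -/

def transPredsOf (RT : List ERule) (tp : List ℕ) : Prop :=
  ∀ p, p ∈ tp ↔ ∃ r ∈ RT, isTransitivityRuleOn p r

def pdefsPreds (P : PDefs) : Set ℕ :=
  {q | ∃ pd ∈ P, q = pd.1 ∨ ∃ a ∈ pd.2, a.pred = q}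

def pcqPreds (Q : PCQ) : Set ℕ :=
  {q | ∃ p ∈ Q, (∃ a : FAtom, p = PAtom.atom a ∧ a.pred = q) ∨
    (∃ n t1 t2, (p = PAtom.std n t1 t2 ∨ p = PAtom.rep n t1 t2) ∧ n = q)}

/-!
Given a model `I` of `F` and `R_L ∪ R_T`, read each fresh predicate `p⁺` as `p`. This is still a
model of `F`, and it satisfies `Q⁺⁺` only if `I` satisfies `Q`; so it suffices that it satisfies
`Π_P`, i.e. that every atom of the definition of the pattern of `p` entails `p(#1,#2)` in `I`
(`p` is transitive in `I` because of `R_T`). This invariant holds for the initial definitions and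
is preserved by each direct rewriting of Step 3. An internal unifier of `P⁺[#1,#2]` with a linear
rule unifies the rule head with instances of definition atoms along a chain of slots from the
external term `us` to `ue`; each slot entails `p` between its endpoints, so by transitivity any
match of the rule body gives `p(us, ue)`, which is what the new atom claims once `us`, `ue` are
renamed `#1`, `#2`. The invariant also records that definition atoms mention exactly `#1` and
`#2`: this pins the unified head to `{us, ue}`, so head variables are frontier variables. New
atoms keep that shape because of saturation: a body term sent elsewhere could be swapped with a
constant unused in the saturated definitions, giving a rewriting whose new atom is isomorphic to
none of their atoms.
-/

namespace FTerm

@[simp] lemma subst_var (σ : ℕ → FTerm) (v : ℕ) : (FTerm.var v).subst σ = σ v := rfl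

@[simp] lemma eval_var (I : Interp) (ν : ℕ → I.Dom) (v : ℕ) : (FTerm.var v).eval I ν = ν v := rfl

lemma eval_subst (I : Interp) (θ : ℕ → I.Dom) (σ : ℕ → FTerm) (t : FTerm) :
    (t.subst σ).eval I θ = t.eval I (fun v => (σ v).eval I θ) := by
  cases t <;> rfl

lemma eval_comp_var {t : FTerm} (ht : ∃ w, t = .var w) {I : Interp} {θ : ℕ → I.Dom}
    {f : FTerm → FTerm} : t.eval I (fun v => (f (.var v)).eval I θ) = (f t).eval I θ := by
  obtain ⟨w, rfl⟩ := ht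
  rfl

lemma subst_comp {t : FTerm} (ht : ∃ v, t = .var v) (m : FTerm → FTerm) (σ : ℕ → FTerm) :
    t.subst (fun v => m (σ v)) = m (t.subst σ) := by
  obtain ⟨v, rfl⟩ := ht
  rfl

lemma exists_eq_var_of_ne_const {t : FTerm} (h : ∀ c, t ≠ .const c) : ∃ v, t = .var v := by
  cases t with
  | var v => exact ⟨v, rfl⟩
  | const c => exact absurd rfl (h c)

end FTerm

namespace FAtom

@[simp] lemma subst_pred (σ : ℕ → FTerm) (a : FAtom) : (a.subst σ).pred = a.pred := rfl

@[simp] lemma subst_args (σ : ℕ → FTerm) (a : FAtom) :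
    (a.subst σ).args = a.args.map (FTerm.subst σ) := rfl

@[simp] lemma mapTerms_pred (f : FTerm → FTerm) (a : FAtom) : (a.mapTerms f).pred = a.pred := rfl

@[simp] lemma mapTerms_args (f : FTerm → FTerm) (a : FAtom) :
    (a.mapTerms f).args = a.args.map f := rfl

lemma sat_subst (I : Interp) (θ : ℕ → I.Dom) (σ : ℕ → FTerm) (a : FAtom) :
    (a.subst σ).sat I θ ↔ a.sat I (fun v => (σ v).eval I θ) := by
  simp only [FAtom.sat, subst_pred, subst_args, List.map_map]
  exact iff_of_eq (congrArg _ (List.map_congr_left fun t _ => FTerm.eval_subst I θ σ t))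

lemma sat_congr (I : Interp) {ν ν' : ℕ → I.Dom} (a : FAtom)
    (h : ∀ v, FTerm.var v ∈ a.args → ν v = ν' v) : a.sat I ν ↔ a.sat I ν' := by
  refine iff_of_eq (congrArg _ (List.map_congr_left fun t ht => ?_))
  cases t with
  | var v => exact h v ht
  | const c => rfl

lemma sat_mapTerms (I : Interp) (θ : ℕ → I.Dom) (f : FTerm → FTerm)
    (hf : ∀ c, f (.const c) = .const c) (a : FAtom) :
    (a.mapTerms f).sat I θ ↔ a.sat I (fun v => (f (.var v)).eval I θ) := by
  simp only [FAtom.sat, mapTerms_pred, mapTerms_args, List.map_map]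
  refine iff_of_eq (congrArg _ (List.map_congr_left fun t _ => ?_))
  cases t with
  | var v => rfl
  | const c => simp only [Function.comp, hf]; rfl

/-- The terms of `a` are exactly the special variables `#1`, `#2`. -/
def HasSpecialTerms (a : FAtom) : Prop := ∀ t, t ∈ a.args ↔ t = .var 0 ∨ t = .var 1

lemma HasSpecialTerms.mem_iff {a : FAtom} (h : a.HasSpecialTerms) (t : FTerm) :
    t ∈ a.args ↔ t = .var 0 ∨ t = .var 1 :=
  h t

lemma subst_comp {a : FAtom} (ha : ∀ t ∈ a.args, ∃ v, t = .var v) (m : FTerm → FTerm)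
    (σ : ℕ → FTerm) : a.subst (fun v => m (σ v)) = (a.subst σ).mapTerms m := by
  simp only [FAtom.subst, FAtom.mapTerms, List.map_map, FAtom.mk.injEq, true_and]
  exact List.map_congr_left fun t ht => FTerm.subst_comp (ha t ht) m σ

end FAtom

lemma exists_const_notMem (L : List FAtom) : ∃ c : ℕ, ∀ a ∈ L, FTerm.const c ∉ a.args := by
  obtain ⟨c, hc⟩ := Set.Finite.exists_notMem
    ((L.flatMap FAtom.args).finite_toSet.preimage (fun _ _ _ _ h => FTerm.const.inj h))
  exact ⟨c, fun a ha hca => hc (List.mem_flatMap.2 ⟨a, ha, hca⟩)⟩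

lemma rel_of_forall_rel_succ_of_lt {β : Type*} {r : β → β → Prop}
    (htrans : ∀ a b c, r a b → r b c → r a c) {f : ℕ → β} {s e : ℕ} (hse : s < e) (h : ∀ j, s ≤ j → j < e → r (f j) (f (j + 1))) :
    r (f s) (f e) := by
  induction e, hse using Nat.le_induction with
  | base => exact h s le_rfl (Nat.lt_succ_self s)
  | succ e hse ih =>
    exact htrans _ _ _ (ih fun j h1 h2 => h j h1 (by omega)) (h e (by omega) (Nat.lt_succ_self e))

lemma ERule.sat.exists_head_sat {I : Interp} {r : ERule} (hr : r.sat I) {b : FAtom}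
    (hb : r.body = [b]) {ν : ℕ → I.Dom} (h : b.sat I ν) :
    ∃ ν', (∀ v, FTerm.var v ∈ b.args → ν' v = ν v) ∧ ∀ a ∈ r.head, a.sat I ν' := by
  obtain ⟨ν', hagree, hhead⟩ := hr ν (by simpa [hb] using h)
  exact ⟨ν', fun v hv => hagree v ⟨b, by simp [hb], hv⟩, hhead⟩

lemma ERule.sat_of_forall {I : Interp} {r : ERule}
    (h : ∀ ν, (∀ a ∈ r.body, a.sat I ν) → ∀ a ∈ r.head, a.sat I ν) : r.sat I :=
  fun ν hν => ⟨ν, fun _ _ => rfl, h ν hν⟩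

lemma rel_trans_of_transPredsOf {I : Interp} {RT : List ERule} {tp : List ℕ}
    (hRT : ∀ r ∈ RT, r.sat I) (htp : transPredsOf RT tp) {k : ℕ} (hk : k ∈ tp)
    (a b c : I.Dom) (hab : I.rel k [a, b]) (hbc : I.rel k [b, c]) : I.rel k [a, c] := by
  obtain ⟨r, hr, x, y, z, hxy, hyz, hxz, hbody, hhead⟩ := (htp k).1 hk
  let ν : ℕ → I.Dom := fun v => if v = x then a else if v = y then b else c
  obtain ⟨ν', hagree, hsat⟩ := hRT r hr ν (by
    simp only [hbody, List.mem_cons, List.not_mem_nil, or_false, forall_eq_or_imp, forall_eq]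
    exact ⟨by simpa [FAtom.sat, ν, hxy.symm] using hab,
      by simpa [FAtom.sat, ν, hxy.symm, hyz.symm, hxz.symm] using hbc⟩)
  have hx : ν' x = a := by
    rw [hagree x ⟨⟨k, [.var x, .var y]⟩, by simp [hbody], by simp⟩]; simp [ν]
  have hz : ν' z = c := by
    rw [hagree z ⟨⟨k, [.var y, .var z]⟩, by simp [hbody], by simp⟩]
    simp [ν, hxz.symm, hyz.symm]
  simpa [FAtom.sat, hx, hz] using hsat ⟨k, [.var x, .var z]⟩ (by simp [hhead])

lemma toPRule_head (tp : List ℕ) (r : ERule) : (toPRule tp r).head = r.head := by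
  unfold toPRule
  split <;> rfl

lemma toPRule_pbody {tp : List ℕ} {r : ERule} (hr : isLinearRule r) :
    (∃ b, r.body = [b] ∧ (toPRule tp r).pbody = .atom b) ∨
      ∃ p u v, r.body = [⟨p, [u, v]⟩] ∧ p ∈ tp ∧ (toPRule tp r).pbody = .rep p u v := by
  obtain ⟨⟨⟨p, args⟩, hb⟩, -⟩ := hr
  by_cases hp : p ∈ tp
  · match args with
    | [u, v] => exact Or.inr ⟨p, u, v, hb, hp, by simp [toPRule, hb, hp]⟩
    | [] | [_] | _ :: _ :: _ :: _ => exact Or.inl ⟨_, hb, by simp [toPRule, hb, hp]⟩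
  · exact Or.inl ⟨_, hb, by simp [toPRule, hb, hp]⟩

lemma pruleNoConst_toPRule {tp : List ℕ} {r : ERule} (hr : isLinearRule r) :
    pruleNoConst (toPRule tp r) := by
  refine ⟨fun t ht => hr.2 t ?_, fun t ⟨a, ha, hta⟩ => hr.2 t ⟨a, ?_, hta⟩⟩
  · rcases toPRule_pbody (tp := tp) hr with ⟨b, hb, hpb⟩ | ⟨p, u, v, hb, -, hpb⟩
    · rw [hpb] at ht
      exact ⟨b, by simp [hb], ht⟩
    · rw [hpb] at ht
      exact ⟨⟨p, [u, v]⟩, by simp [hb], ht⟩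
  · rw [toPRule_head] at ha
    exact List.mem_append_right _ ha

lemma PAtom.mem_varList {p : PAtom} {w : ℕ} : w ∈ p.varList ↔ FTerm.var w ∈ p.terms := by
  simp only [PAtom.varList, List.mem_filterMap]
  constructor
  · rintro ⟨t, ht, hw⟩
    cases t <;> simp_all
  · exact fun h => ⟨_, h, rfl⟩

lemma mem_of_mem_defAtoms {P : PDefs} {k : ℕ} {a : FAtom} (h : a ∈ defAtoms P k) :
    ∃ l, (k, l) ∈ P ∧ a ∈ l := by
  unfold defAtoms at h
  cases hl : List.lookup k P with
  | none => simp [hl] at h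
  | some l =>
    obtain ⟨l₁, l₂, rfl, -⟩ := List.lookup_eq_some_iff.1 hl
    exact ⟨l, by simp, by simpa [hl] using h⟩

lemma lookup_updateDef (P : PDefs) (n : ℕ) (L : List FAtom) (k : ℕ) :
    (updateDef P n L).lookup k = (P.lookup k).map fun l => if k = n then l ++ L else l := by
  induction P with
  | nil => rfl
  | cons pd P ih =>
    obtain ⟨a, l⟩ := pd
    have hstep : updateDef ((a, l) :: P) n L
        = (a, if a = n then l ++ L else l) :: updateDef P n L := by
      by_cases han : a = n <;> simp [updateDef, han]
    rw [hstep, List.lookup_cons, List.lookup_cons]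
    by_cases hka : k = a
    · subst hka
      simp
    · have hne : (k == a) = false := beq_false_of_ne hka
      simp only [hne, ih]

lemma defAtoms_sublist_updateDef (P : PDefs) (n : ℕ) (L : List FAtom) (k : ℕ) :
    (defAtoms P k).Sublist (defAtoms (updateDef P n L) k) := by
  unfold defAtoms
  rw [lookup_updateDef]
  cases P.lookup k with
  | none => simp
  | some l => by_cases hkn : k = n <;> simp [hkn]

lemma defAtoms_updateDef_self (P : PDefs) (n : ℕ) (L : List FAtom) (h : defAtoms P n ≠ []) :
    defAtoms (updateDef P n L) n = defAtoms P n ++ L := by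
  unfold defAtoms at *
  rw [lookup_updateDef]
  cases hl : P.lookup n with
  | none => simp [hl] at h
  | some l => simp

lemma mem_updateDef {P : PDefs} {n : ℕ} {L : List FAtom} {pd : ℕ × List FAtom}
    (h : pd ∈ updateDef P n L) :
    ∃ pd₀ ∈ P, pd.1 = pd₀.1 ∧ (pd.2 = pd₀.2 ∨ pd₀.1 = n ∧ pd.2 = pd₀.2 ++ L) := by
  obtain ⟨pd₀, hpd₀, rfl⟩ := List.mem_map.1 h
  refine ⟨pd₀, hpd₀, ?_⟩
  split_ifs with hn <;> simp [hn]

lemma getElem?_chainTerms {t1 t2 : FTerm} {xs : List ℕ} {j : ℕ} {p : FTerm × FTerm}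
    (h : (chainTerms t1 t2 xs)[j]? = some p) :
    p = ((chainPts t1 t2 xs).getD j default, (chainPts t1 t2 xs).getD (j + 1) default) := by
  induction xs generalizing t1 j with
  | nil =>
    cases j with
    | zero => simpa [chainTerms, chainPts] using h.symm
    | succ j => simp [chainTerms] at h
  | cons x xs ih =>
    cases j with
    | zero => simpa [chainTerms, chainPts] using h.symm
    | succ j =>
      simpa [chainPts] using ih (t1 := .var x) (j := j) (by simpa [chainTerms] using h)

lemma getElem?_slotAtoms {n : ℕ} {t1 t2 : FTerm} {xs : List ℕ}
    {es : List (Option (FAtom × (ℕ → ℕ)))} {j : ℕ} {a : FAtom}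
    (h : (slotAtoms n t1 t2 xs es)[j]? = some (some a)) :
    ∃ d ρ, some (d, ρ) ∈ es ∧
      a = instDefAtom d ((chainPts t1 t2 xs).getD j default)
        ((chainPts t1 t2 xs).getD (j + 1) default) ρ := by
  simp only [slotAtoms, List.getElem?_map, Option.map_eq_some_iff] at h
  obtain ⟨⟨pts, o⟩, hz, ho⟩ := h
  obtain ⟨hpts, hes⟩ := List.getElem?_zip_eq_some.1 hz
  obtain ⟨⟨d, ρ⟩, rfl, rfl⟩ := ho
  obtain rfl := getElem?_chainTerms hpts
  exact ⟨d, ρ, List.mem_of_getElem? hes, rfl⟩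

lemma exists_eq_var_of_getD_chainPts (v₁ v₂ : ℕ) (xs : List ℕ) (j : ℕ) :
    ∃ w, (chainPts (.var v₁) (.var v₂) xs).getD j default = .var w := by
  rw [List.getD_eq_getElem?_getD]
  cases h : (chainPts (.var v₁) (.var v₂) xs)[j]? with
  | none => exact ⟨0, rfl⟩
  | some t =>
    have := List.mem_of_getElem? h
    simp only [chainPts, List.mem_cons, List.mem_append, List.mem_map,
      List.not_mem_nil, or_false] at this
    rcases this with rfl | ⟨x, -, rfl⟩ | rfl <;> exact ⟨_, rfl⟩

lemma mem_args_instDefAtom {d : FAtom} (hdef : d.HasSpecialTerms)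
    (t1 t2 : FTerm) (ρ : ℕ → ℕ) (t : FTerm) :
    t ∈ (instDefAtom d t1 t2 ρ).args ↔ t = t1 ∨ t = t2 := by
  simp only [instDefAtom, FAtom.subst_args, List.mem_map, hdef.mem_iff]
  constructor
  · rintro ⟨t', rfl | rfl, rfl⟩ <;> simp
  · rintro (rfl | rfl)
    exacts [⟨.var 0, by simp⟩, ⟨.var 1, by simp⟩]

/-- The data of an internal unifier that soundness depends on: slots `s ≤ j < e` of a chain of
points `pt`, each holding an instance of a definition atom of pattern `n` that `σ` unifies with
the head `hd`; `σ` fixes the two external points `pt s ≠ pt e`. -/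
structure ChainUnifier (P : PDefs) (n : ℕ) (hd : FAtom) (σ : ℕ → FTerm) where
  pt : ℕ → FTerm
  s : ℕ
  e : ℕ
  s_lt_e : s < e
  slot : ∀ j, s ≤ j → j < e → ∃ d ∈ defAtoms P n, ∃ ρ,
    (instDefAtom d (pt j) (pt (j + 1)) ρ).subst σ = hd.subst σ
  subst_start : (pt s).subst σ = pt s
  subst_stop : (pt e).subst σ = pt e
  start_ne_stop : pt s ≠ pt e

namespace ChainUnifier

variable {P : PDefs} {n : ℕ} {hd : FAtom} {σ : ℕ → FTerm} (C : ChainUnifier P n hd σ)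

lemma rel_of_sat (I : Interp)
    (hsound : ∀ d ∈ defAtoms P n, ∀ θ : ℕ → I.Dom, d.sat I θ → I.rel n [θ 0, θ 1])
    (htrans : ∀ a b c : I.Dom, I.rel n [a, b] → I.rel n [b, c] → I.rel n [a, c])
    (θ : ℕ → I.Dom) (h : (hd.subst σ).sat I θ) :
    I.rel n [(C.pt C.s).eval I θ, (C.pt C.e).eval I θ] := by
  have hedge : ∀ j, C.s ≤ j → j < C.e →
      I.rel n [((C.pt j).subst σ).eval I θ, ((C.pt (j + 1)).subst σ).eval I θ] := by
    intro j hj₁ hj₂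
    obtain ⟨d, hdP, ρ, heq⟩ := C.slot j hj₁ hj₂
    rw [← heq, instDefAtom, FAtom.sat_subst, FAtom.sat_subst] at h
    simpa [FTerm.eval_subst] using hsound d hdP _ h
  simpa only [C.subst_start, C.subst_stop] using rel_of_forall_rel_succ_of_lt htrans C.s_lt_e hedge

/-- Each slot atom has exactly the terms `pt j`, `pt (j+1)`, so the first and the last slot
pin the `σ`-image of the head to the two external points. -/
lemma mem_subst_head_args (hshape : ∀ d ∈ defAtoms P n, d.HasSpecialTerms)
    (u : FTerm) : u ∈ (hd.subst σ).args ↔ u = C.pt C.s ∨ u = C.pt C.e := by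
  have hslot : ∀ j, C.s ≤ j → j < C.e → ∀ u, u ∈ (hd.subst σ).args ↔
      u = (C.pt j).subst σ ∨ u = (C.pt (j + 1)).subst σ := by
    intro j hj₁ hj₂ u
    obtain ⟨d, hdP, ρ, heq⟩ := C.slot j hj₁ hj₂
    rw [← heq, FAtom.subst_args, List.mem_map]
    simp only [mem_args_instDefAtom (hshape d hdP)]
    constructor
    · rintro ⟨t, rfl | rfl, rfl⟩ <;> simp
    · rintro (rfl | rfl) <;> exact ⟨_, by simp, rfl⟩
  have hfirst := hslot C.s le_rfl C.s_lt_e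
  have hlast := hslot (C.e - 1) (by have := C.s_lt_e; omega) (by have := C.s_lt_e; omega)
  rw [Nat.sub_add_cancel (by have := C.s_lt_e; omega), C.subst_stop] at hlast
  rw [C.subst_start] at hfirst
  have hnext : (C.pt (C.s + 1)).subst σ = C.pt C.e := by
    rcases (hfirst _).1 ((hlast _).2 (Or.inr rfl)) with h | h
    · exact absurd h.symm C.start_ne_stop
    · exact h.symm
  rw [hfirst, hnext]

lemma rel_of_sat_body (I : Interp)
    (hsound : ∀ d ∈ defAtoms P n, ∀ θ : ℕ → I.Dom, d.sat I θ → I.rel n [θ 0, θ 1])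
    (htrans : ∀ a b c : I.Dom, I.rel n [a, b] → I.rel n [b, c] → I.rel n [a, c])
    {r : ERule} (hr : r.sat I) {b : FAtom} (hb : r.body = [b]) (hhd : hd ∈ r.head)
    (hfront : ∀ t ∈ hd.args, ∃ w, t = .var w ∧ FTerm.var w ∈ b.args)
    (θ : ℕ → I.Dom) (h : (b.subst σ).sat I θ) :
    I.rel n [(C.pt C.s).eval I θ, (C.pt C.e).eval I θ] := by
  rw [FAtom.sat_subst] at h
  obtain ⟨ν, hagree, hhead⟩ := hr.exists_head_sat hb h
  refine C.rel_of_sat I hsound htrans θ ((FAtom.sat_subst ..).2 ?_)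
  refine (FAtom.sat_congr I hd fun v hv => ?_).1 (hhead hd hhd)
  obtain ⟨w, hw, hwb⟩ := hfront _ hv
  obtain rfl : v = w := FTerm.var.inj hw
  exact hagree v hwb

lemma frontier (hshape : ∀ d ∈ defAtoms P n, d.HasSpecialTerms)
    {R : PRule} (hRc : pruleNoConst R) (hhd : R.head = [hd])
    (hprot : ∀ z ∈ R.exV, C.pt C.s ≠ σ z ∧ C.pt C.e ≠ σ z) :
    ∀ t ∈ hd.args, ∃ w, t = .var w ∧ FTerm.var w ∈ R.pbody.terms := by
  intro t ht
  obtain ⟨w, rfl⟩ := FTerm.exists_eq_var_of_ne_const (hRc.2 t ⟨hd, by simp [hhd], ht⟩)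
  refine ⟨w, rfl, by_contra fun hw => ?_⟩
  have hz : w ∈ R.exV := ⟨⟨hd, by simp [hhd], ht⟩, fun h => hw (PAtom.mem_varList.1 h)⟩
  rcases (C.mem_subst_head_args hshape (σ w)).1 (List.mem_map.2 ⟨_, ht, rfl⟩) with h | h
  exacts [(hprot w hz).1 h.symm, (hprot w hz).2 h.symm]

lemma exists_mem_body_subst_eq
    (hshape : ∀ d ∈ defAtoms P n, d.HasSpecialTerms) {b : FAtom}
    (hfront : ∀ t ∈ hd.args, ∃ w, t = .var w ∧ FTerm.var w ∈ b.args) {x : FTerm}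
    (hx : x = C.pt C.s ∨ x = C.pt C.e) : ∃ t ∈ b.args, t.subst σ = x := by
  obtain ⟨t, ht, rfl⟩ := List.mem_map.1 ((C.mem_subst_head_args hshape x).2 hx)
  obtain ⟨w, rfl, hw⟩ := hfront t ht
  exact ⟨_, hw, rfl⟩

end ChainUnifier

lemma PExpWF.mono {P P' : PDefs} (hsub : ∀ k, defAtoms P k ⊆ defAtoms P' k) {p : PAtom}
    {e : PExp} (h : PExpWF P p e) : PExpWF P' p e := by
  cases p with
  | atom a => exact h
  | std m t1 t2 => exact h.imp_right fun ⟨a, ρ, he, ha, hρ⟩ => ⟨a, ρ, he, hsub m ha, hρ⟩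
  | rep m t1 t2 =>
    exact h.imp_right fun ⟨xs, es, he, hlen, hnd, hes⟩ =>
      ⟨xs, es, he, hlen, hnd, fun o ho a ρ hoa => (hes o ho a ρ hoa).imp_left (hsub m ·)⟩

def Instn.mono {P P' : PDefs} (hsub : ∀ k, defAtoms P k ⊆ defAtoms P' k) {Q : PCQ}
    (T : Instn P Q) : Instn P' Q where
  exps := T.exps
  len := T.len
  wf i hq he := (T.wf i hq he).mono hsub
  fresh_nodup := T.fresh_nodup
  fresh := T.fresh

lemma IsIOI.mono {P P' : PDefs} (hsub : ∀ k, (defAtoms P k).Sublist (defAtoms P' k))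
    {p arity : ℕ} {Q : PCQ} {T : Instn P Q}
    (hQ : ∀ m t1 t2, PAtom.rep m t1 t2 ∈ Q →
      (defAtoms P m).filter (fun a => decide (a.pred = p)) ≠ [])
    (h : IsIOI P p arity T) : IsIOI P' p arity (T.mono fun k => (hsub k).subset) := by
  intro i hq he
  obtain ⟨hstd, hrep⟩ := h i hq he
  refine ⟨hstd, fun m t1 t2 hget => ?_⟩
  have hne := hQ m t1 t2 (hget ▸ List.get_mem Q ⟨i, hq⟩)
  have hfilter := (hsub m).filter (fun a => decide (a.pred = p))
  refine ⟨fun hnil => absurd (List.sublist_nil.1 (hnil ▸ hfilter)) hne, fun _ => ?_⟩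
  obtain ⟨xs, es, hexp, hbound, hpred⟩ := (hrep m t1 t2 hget).2 hne
  have := hfilter.length_le
  exact ⟨xs, es, hexp, by omega, hpred⟩

def CtxUnifier.comp {ctx : PCQ} {R : PRule} (u : CtxUnifier ctx R) (m : FTerm → FTerm)
    (hm : Function.Injective m) (hvar : ∀ t ∈ atomsTerms (u.Qp ++ u.Hp), ∃ v, t = .var v) :
    CtxUnifier ctx R where
  Qp := u.Qp
  Hp := u.Hp
  σ v := m (u.σ v)
  Qp_ne := u.Qp_ne
  Qp_sub := u.Qp_sub
  Hp_sub := u.Hp_sub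
  unif := by
    have hQ : ∀ a ∈ u.Qp, a.subst (fun v => m (u.σ v)) = (a.subst u.σ).mapTerms m :=
      fun a ha => FAtom.subst_comp (fun t ht => hvar t ⟨a, by simp [ha], ht⟩) m u.σ
    have hH : ∀ a ∈ u.Hp, a.subst (fun v => m (u.σ v)) = (a.subst u.σ).mapTerms m :=
      fun a ha => FAtom.subst_comp (fun t ht => hvar t ⟨a, by simp [ha], ht⟩) m u.σ
    ext x
    constructor
    · rintro ⟨a, ha, rfl⟩
      obtain ⟨b, hb, heq⟩ : a.subst u.σ ∈ {x | ∃ b ∈ u.Hp, x = b.subst u.σ} :=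
        u.unif ▸ ⟨a, ha, rfl⟩
      exact ⟨b, hb, by rw [hQ a ha, hH b hb, heq]⟩
    · rintro ⟨b, hb, rfl⟩
      obtain ⟨a, ha, heq⟩ : b.subst u.σ ∈ {x | ∃ a ∈ u.Qp, x = a.subst u.σ} :=
        u.unif ▸ ⟨b, hb, rfl⟩
      exact ⟨a, ha, by rw [hQ a ha, hH b hb, heq]⟩
  exCond z hz t ht heq hne := by
    rw [FTerm.subst_comp (hvar t ht)] at heq
    exact u.exCond z hz t ht (hm heq) hne
  singlePiece := by
    rintro ⟨Qs, hQs, hQsQp, hss, hex⟩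
    refine u.singlePiece ⟨Qs, hQs, hQsQp, hss, fun z hz t ht heq hne => hex z hz t ht ?_ hne⟩
    obtain ⟨a, ha, hta⟩ := ht
    have hvt := hvar t ⟨a, by simpa using (List.mem_append.1 ha).imp_left (hQsQp a), hta⟩
    rw [FTerm.subst_comp hvt, heq]

lemma CtxUnifier.subst_eq_of_head {ctx : PCQ} {R : PRule} (u : CtxUnifier ctx R) {hd : FAtom}
    (hhd : R.head = [hd]) {a : FAtom} (ha : a ∈ u.Qp) : a.subst u.σ = hd.subst u.σ := by
  have hmem : a.subst u.σ ∈ {x : FAtom | ∃ b ∈ u.Qp, x = b.subst u.σ} := ⟨a, ha, rfl⟩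
  rw [u.unif] at hmem
  obtain ⟨b, hb, heq⟩ := hmem
  have := u.Hp_sub b hb
  rw [hhd, List.mem_singleton] at this
  rw [heq, this]

def IsDefRewritingAt (P : PDefs) (n : ℕ) (R : PRule) (σ : ℕ → FTerm) (us ue : FTerm) : Prop :=
  ∃ hd : FAtom, R.head = [hd] ∧
  ∃ μ : PUnifier P [PAtom.rep n (.var 0) (.var 1)] R, μ.u.σ = σ ∧
    IsIOI P hd.pred hd.args.length μ.T ∧
    ∃ n' t1 t2 xs es s e, μ.internalData 0 n' t1 t2 xs es s e ∧
      (chainPts t1 t2 xs).getD s default = us ∧ (chainPts t1 t2 xs).getD e default = ue ∧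
      us.subst σ = us ∧ ue.subst σ = ue

lemma isDefRewriting_iff {P : PDefs} {n : ℕ} {R : PRule} {P' : PDefs} :
    IsDefRewriting P n R P' ↔
      ∃ σ us ue, IsDefRewritingAt P n R σ us ue ∧ P' = updateDef P n (newAtomsFor P R σ us ue) := by
  constructor
  · rintro ⟨hd, hhd, μ, hIOI, n', t1, t2, xs, es, s, e, hint, hfs, hfe, rfl⟩
    exact ⟨_, _, _, ⟨hd, hhd, μ, rfl, hIOI, n', t1, t2, xs, es, s, e, hint, rfl, rfl, hfs, hfe⟩,
      rfl⟩
  · rintro ⟨σ, us, ue, ⟨hd, hhd, μ, rfl, hIOI, n', t1, t2, xs, es, s, e, hint, rfl, rfl, hfs, hfe⟩,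
      rfl⟩
    exact ⟨hd, hhd, μ, hIOI, n', t1, t2, xs, es, s, e, hint, hfs, hfe, rfl⟩

lemma PUnifier.internalData_single {P : PDefs} {n : ℕ} {R : PRule}
    {μ : PUnifier P [PAtom.rep n (.var 0) (.var 1)] R} {n' : ℕ} {t1 t2 : FTerm} {xs : List ℕ}
    {es : List (Option (FAtom × (ℕ → ℕ)))} {s e : ℕ} (h : μ.internalData 0 n' t1 t2 xs es s e) :
    n' = n ∧ t1 = .var 0 ∧ t2 = .var 1 ∧ ∀ d ρ, some (d, ρ) ∈ es → d ∈ defAtoms P n := by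
  obtain ⟨hq, he, hQget, hEget, -⟩ := h
  simp only [List.get_eq_getElem, List.getElem_singleton, PAtom.rep.injEq] at hQget
  obtain ⟨rfl, rfl, rfl⟩ := hQget
  refine ⟨rfl, rfl, rfl, ?_⟩
  have hwf := μ.T.wf 0 hq he
  simp only [List.get_eq_getElem, List.getElem_singleton] at hwf
  rw [show μ.T.exps[0] = PExp.repE xs es from hEget] at hwf
  simp only [PExpWF, reduceCtorEq, PExp.repE.injEq, false_or] at hwf
  obtain ⟨_, _, ⟨rfl, rfl⟩, -, -, hes⟩ := hwf
  exact fun d ρ hdρ => (hes _ hdρ d ρ rfl).1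

lemma PUnifier.internalData_Qp_var {P : PDefs} {n : ℕ} {R : PRule}
    {μ : PUnifier P [PAtom.rep n (.var 0) (.var 1)] R} {xs : List ℕ}
    {es : List (Option (FAtom × (ℕ → ℕ)))} {s e : ℕ}
    (h : μ.internalData 0 n (.var 0) (.var 1) xs es s e)
    (hshape : ∀ d ∈ defAtoms P n, ∀ t ∈ d.args, ∃ v, t = .var v) {a : FAtom} (ha : a ∈ μ.u.Qp) :
    ∀ t ∈ a.args, ∃ v, t = .var v := by
  obtain ⟨-, -, -, hdefs⟩ := PUnifier.internalData_single h
  obtain ⟨-, -, -, -, hQp, -⟩ := h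
  obtain ⟨j, hj⟩ := List.mem_iff_getElem?.1 (hQp a ha)
  obtain ⟨d, ρ, hdρ, rfl⟩ := getElem?_slotAtoms hj
  intro t ht
  obtain ⟨t', ht', rfl⟩ := List.mem_map.1 ht
  obtain ⟨v, rfl⟩ := hshape d (hdefs d ρ hdρ) t' ht'
  simp only [FTerm.subst_var]
  split_ifs
  exacts [exists_eq_var_of_getD_chainPts 0 1 xs j, exists_eq_var_of_getD_chainPts 0 1 xs (j + 1),
    ⟨_, rfl⟩]

namespace IsDefRewritingAt

variable {P : PDefs} {n : ℕ} {R : PRule} {σ : ℕ → FTerm} {us ue : FTerm}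

lemma exists_chainUnifier (h : IsDefRewritingAt P n R σ us ue) :
    ∃ hd, R.head = [hd] ∧ ∃ C : ChainUnifier P n hd σ, C.pt C.s = us ∧ C.pt C.e = ue ∧
      (∀ z ∈ R.exV, us ≠ σ z ∧ ue ≠ σ z) ∧ (∃ w, us = .var w) ∧ (∃ w, ue = .var w) := by
  obtain ⟨hd, hhd, μ, rfl, -, n', t1, t2, xs, es, s, e, hint, rfl, rfl, hfs, hfe⟩ := h
  obtain ⟨rfl, rfl, rfl, hdefs⟩ := PUnifier.internalData_single hint
  obtain ⟨-, -, -, -, -, hse, hee, hslot, hne, hprot⟩ := hint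
  refine ⟨hd, hhd, ⟨fun j => (chainPts (.var 0) (.var 1) xs).getD j default, s, e, hse,
    fun j hj₁ hj₂ => ?_, hfs, hfe, fun hco => hne (by rw [hco])⟩, rfl, rfl,
    fun z hz => ?_, exists_eq_var_of_getD_chainPts 0 1 xs s,
    exists_eq_var_of_getD_chainPts 0 1 xs e⟩
  · obtain ⟨a, ha, hget⟩ := (hslot j (by omega)).2 ⟨hj₁, hj₂⟩
    obtain ⟨d, ρ, hdρ, rfl⟩ := getElem?_slotAtoms hget
    exact ⟨d, hdefs d ρ hdρ, ρ, μ.u.subst_eq_of_head hhd ha⟩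
  · obtain ⟨h₁, h₂⟩ := hprot z hz
    rw [hfs] at h₁
    rw [hfe] at h₂
    exact ⟨h₁, h₂⟩

lemma mono {P' : PDefs} (h : IsDefRewritingAt P n R σ us ue)
    (hsub : ∀ k, (defAtoms P k).Sublist (defAtoms P' k)) : IsDefRewritingAt P' n R σ us ue := by
  obtain ⟨hd, hhd, C, -⟩ := h.exists_chainUnifier
  obtain ⟨d, hdP, ρ, heq⟩ := C.slot C.s le_rfl C.s_lt_e
  obtain ⟨hd', hhd', μ, rfl, hIOI, hint⟩ := h
  obtain rfl : hd = hd' := by simpa [hhd] using hhd'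
  have hpred : d.pred = hd.pred := by simpa [instDefAtom] using congrArg FAtom.pred heq
  refine ⟨hd, hhd, ⟨μ.T.mono fun k => (hsub k).subset, μ.u⟩, rfl, hIOI.mono hsub ?_, hint⟩
  intro m t1 t2 hm
  obtain ⟨rfl, -, -⟩ : m = n ∧ _ := by simpa using hm
  exact List.ne_nil_of_mem (List.mem_filter.2 ⟨hdP, by simp [hpred]⟩)

lemma comp (h : IsDefRewritingAt P n R σ us ue)
    (hshape : ∀ d ∈ defAtoms P n, ∀ t ∈ d.args, ∃ v, t = .var v) (hR : pruleNoConst R)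
    {m : FTerm → FTerm} (hm : Function.Injective m) (hus : m us = us) (hue : m ue = ue) :
    IsDefRewritingAt P n R (fun v => m (σ v)) us ue := by
  obtain ⟨-, -, -, -, -, hprot, hus_var, hue_var⟩ := h.exists_chainUnifier
  obtain ⟨hd, hhd, μ, rfl, hIOI, n', t1, t2, xs, es, s, e, hint, rfl, rfl, hfs, hfe⟩ := h
  obtain ⟨rfl, rfl, rfl, hdefs⟩ := PUnifier.internalData_single hint
  have hvar : ∀ t ∈ atomsTerms (μ.u.Qp ++ μ.u.Hp), ∃ v, t = .var v := by
    rintro t ⟨a, ha, hta⟩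
    rcases List.mem_append.1 ha with ha | ha
    · exact PUnifier.internalData_Qp_var hint hshape ha t hta
    · exact FTerm.exists_eq_var_of_ne_const (hR.2 t ⟨a, μ.u.Hp_sub a ha, hta⟩)
  have hstart : FTerm.subst (fun v => m (μ.u.σ v)) ((chainPts (.var 0) (.var 1) xs).getD s default)
      = (chainPts (.var 0) (.var 1) xs).getD s default := by
    rw [FTerm.subst_comp hus_var, hfs, hus]
  have hstop : FTerm.subst (fun v => m (μ.u.σ v)) ((chainPts (.var 0) (.var 1) xs).getD e default)
      = (chainPts (.var 0) (.var 1) xs).getD e default := by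
    rw [FTerm.subst_comp hue_var, hfe, hue]
  obtain ⟨hq, he, hQget, hEget, hQp, hse, hee, hslot, hne, -⟩ := hint
  refine ⟨hd, hhd, ⟨μ.T, μ.u.comp m hm hvar⟩, rfl, hIOI, _, _, _, xs, es, s, e,
    ⟨hq, he, hQget, hEget, hQp, hse, hee, hslot, ?_, fun z hz => ⟨?_, ?_⟩⟩, rfl, rfl, hstart,
    hstop⟩
  · change FTerm.subst (fun v => m (μ.u.σ v)) _ ≠ FTerm.subst (fun v => m (μ.u.σ v)) _
    rw [hstart, hstop]
    intro hco
    exact hne (by rw [hfs, hfe, hco])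
  · change FTerm.subst (fun v => m (μ.u.σ v)) _ ≠ m (μ.u.σ z)
    rw [hstart, ← hus]
    exact fun hco => (hprot z hz).1 (hm hco)
  · change FTerm.subst (fun v => m (μ.u.σ v)) _ ≠ m (μ.u.σ z)
    rw [hstop, ← hue]
    exact fun hco => (hprot z hz).2 (hm hco)

end IsDefRewritingAt

/-- The fresh-constant argument: if `σ` sent a body term `t` elsewhere than to an external
term, swapping `σ t` with a constant `c` unused in `Pf` would give a rewriting of the saturated
`Pf` adding an atom that contains `c`, which no atom of `Pf` is isomorphic to. -/
lemma IsDefRewritingAt.subst_mem_of_saturated {RLp : List PRule} {P Pf : PDefs} {n : ℕ}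
    {R : PRule} {σ : ℕ → FTerm} {us ue : FTerm}
    (hclose : ∀ P', DefStep RLp Pf P' →
      ∀ k, ∀ a ∈ defAtoms P' k, ∃ b ∈ defAtoms Pf k, isoDefAtom a b)
    (hsub : ∀ k, (defAtoms P k).Sublist (defAtoms Pf k))
    (hshape : ∀ d ∈ defAtoms P n, ∀ t ∈ d.args, ∃ v, t = .var v)
    (hR : R ∈ RLp) (hRc : pruleNoConst R) (h : IsDefRewritingAt P n R σ us ue)
    {b : FAtom} (hb : R.pbody = .atom b) : ∀ t ∈ b.args, t.subst σ = us ∨ t.subst σ = ue := by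
  intro t ht
  by_contra hcon
  rw [not_or] at hcon
  obtain ⟨w, rfl⟩ := FTerm.exists_eq_var_of_ne_const (hRc.1 t (by simpa [hb, PAtom.terms] using ht))
  obtain ⟨hd, -, C, -, -, -, ⟨w₀, rfl⟩, ⟨w₁, rfl⟩⟩ := h.exists_chainUnifier
  obtain ⟨d, hdP, -⟩ := C.slot C.s le_rfl C.s_lt_e
  obtain ⟨c, hc⟩ := exists_const_notMem (defAtoms Pf n)
  let m := Equiv.swap (σ w) (FTerm.const c)
  have hm : ∀ v, m (.var v) ≠ .var v → FTerm.var v = σ w := fun v hv => by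
    by_contra hne
    exact hv (Equiv.swap_apply_of_ne_of_ne hne (by simp))
  have h' := (h.comp hshape hRc m.injective (by_contra fun hv => hcon.1 (hm w₀ hv).symm)
    (by_contra fun hv => hcon.2 (hm w₁ hv).symm)).mono hsub
  have hstep : DefStep RLp Pf (updateDef Pf n (newAtomsFor Pf R (fun v => m (σ v)) _ _)) :=
    ⟨n, R, hR, isDefRewriting_iff.2 ⟨_, _, _, h', rfl⟩⟩
  obtain ⟨b₀, hb₀, f, -, -, -, rfl⟩ := hclose _ hstep n _ (by
    rw [defAtoms_updateDef_self _ _ _ (List.ne_nil_of_mem ((hsub n).subset hdP))]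
    simp only [newAtomsFor, hb]
    exact List.mem_append_right _ (List.mem_singleton_self _))
  refine hc _ hb₀ (List.mem_map.2 ⟨.const c, List.mem_map.2 ⟨.const c, ?_, ?_⟩, rfl⟩)
  · exact List.mem_map.2 ⟨.var w, ht, by simp [m]⟩
  · simp [replExt]

lemma replExt_left (us ue : FTerm) : replExt us ue us = .var 0 := by simp [replExt]

lemma replExt_right {us ue : FTerm} (h : us ≠ ue) : replExt us ue ue = .var 1 := by
  simp [replExt, h.symm]

lemma replExt_const {us ue : FTerm} (hus : ∃ w, us = .var w) (hue : ∃ w, ue = .var w) (c : ℕ) :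
    replExt us ue (.const c) = .const c := by
  obtain ⟨w₀, rfl⟩ := hus
  obtain ⟨w₁, rfl⟩ := hue
  simp [replExt]

lemma FAtom.HasSpecialTerms.mapTerms_swap01 {a : FAtom} (h : a.HasSpecialTerms) :
    (a.mapTerms swap01).HasSpecialTerms := by
  intro t
  simp only [FAtom.mapTerms_args, List.mem_map, h.mem_iff]
  constructor
  · rintro ⟨t', rfl | rfl, rfl⟩ <;> simp [swap01]
  · rintro (rfl | rfl)
    exacts [⟨.var 1, by simp [swap01]⟩, ⟨.var 0, by simp [swap01]⟩]

lemma sat_mapTerms_swap01 (I : Interp) (θ : ℕ → I.Dom) (a : FAtom) :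
    (a.mapTerms swap01).sat I θ ↔
      a.sat I (fun v => if v = 0 then θ 1 else if v = 1 then θ 0 else θ v) := by
  rw [FAtom.sat_mapTerms I θ swap01 (fun c => by simp [swap01])]
  refine iff_of_eq (congrArg (fun θ' => a.sat I θ') (funext fun v => ?_))
  by_cases h0 : v = 0
  · simp [swap01, h0]
  · by_cases h1 : v = 1 <;> simp [swap01, h0, h1]

structure SoundDefAtom (I : Interp) (plus : ℕ → ℕ) (k : ℕ) (a : FAtom) : Prop where
  pred_ne_plus : ∀ q, a.pred ≠ plus q
  hasSpecialTerms : a.HasSpecialTerms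
  rel_of_sat : ∀ θ : ℕ → I.Dom, a.sat I θ → I.rel k [θ 0, θ 1]

def SoundDefs (I : Interp) (plus : ℕ → ℕ) (tp : List ℕ) (P : PDefs) : Prop :=
  ∀ pd ∈ P, pd.1 ∈ tp ∧ ∀ a ∈ pd.2, SoundDefAtom I plus pd.1 a

namespace SoundDefs

variable {I : Interp} {plus : ℕ → ℕ} {tp : List ℕ} {P : PDefs}

lemma of_mem_defAtoms (hP : SoundDefs I plus tp P) {k : ℕ} {a : FAtom} (ha : a ∈ defAtoms P k) :
    k ∈ tp ∧ SoundDefAtom I plus k a := by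
  obtain ⟨l, hl, hal⟩ := mem_of_mem_defAtoms ha
  exact ⟨(hP _ hl).1, (hP _ hl).2 a hal⟩

lemma updateDef (hP : SoundDefs I plus tp P) {n : ℕ} {L : List FAtom}
    (hL : ∀ a ∈ L, SoundDefAtom I plus n a) : SoundDefs I plus tp (updateDef P n L) := by
  intro pd hpd
  obtain ⟨pd₀, hpd₀, hkey, hval⟩ := mem_updateDef hpd
  rw [hkey]
  refine ⟨(hP pd₀ hpd₀).1, fun a ha => ?_⟩
  rcases hval with hval | ⟨rfl, hval⟩
  · exact (hP pd₀ hpd₀).2 a (hval ▸ ha)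
  · rcases List.mem_append.1 (hval ▸ ha) with ha | ha
    exacts [(hP pd₀ hpd₀).2 a ha, hL a ha]

end SoundDefs

namespace ChainUnifier

variable {P : PDefs} {n : ℕ} {hd : FAtom} {σ : ℕ → FTerm} (C : ChainUnifier P n hd σ)

variable {I : Interp} {plus : ℕ → ℕ} {tp : List ℕ}

lemma soundDefAtom_of_atom_body (hP : SoundDefs I plus tp P)
    (htrans : ∀ a b c : I.Dom, I.rel n [a, b] → I.rel n [b, c] → I.rel n [a, c])
    {r : ERule} (hr : r.sat I) {b : FAtom} (hb : r.body = [b]) (hhd : hd ∈ r.head)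
    (hbpred : ∀ q, b.pred ≠ plus q)
    (hfront : ∀ t ∈ hd.args, ∃ w, t = .var w ∧ FTerm.var w ∈ b.args)
    (hbody : ∀ t ∈ b.args, t.subst σ = C.pt C.s ∨ t.subst σ = C.pt C.e)
    (hs : ∃ w, C.pt C.s = .var w) (he : ∃ w, C.pt C.e = .var w) :
    SoundDefAtom I plus n ((b.subst σ).mapTerms (replExt (C.pt C.s) (C.pt C.e))) := by
  have hshape : ∀ d ∈ defAtoms P n, d.HasSpecialTerms :=
    fun d hdP => (hP.of_mem_defAtoms hdP).2.hasSpecialTerms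
  have hne := C.start_ne_stop
  refine ⟨hbpred, fun t => ?_, fun θ hθ => ?_⟩
  · simp only [FAtom.mapTerms_args, FAtom.subst_args, List.map_map, List.mem_map,
      Function.comp_apply]
    constructor
    · rintro ⟨t', ht', rfl⟩
      rcases hbody t' ht' with h | h <;> rw [h]
      exacts [Or.inl (replExt_left _ _), Or.inr (replExt_right hne)]
    · rintro (rfl | rfl)
      · obtain ⟨t', ht', hts⟩ := C.exists_mem_body_subst_eq hshape hfront (Or.inl rfl)
        exact ⟨t', ht', by rw [hts, replExt_left]⟩
      · obtain ⟨t', ht', hts⟩ := C.exists_mem_body_subst_eq hshape hfront (Or.inr rfl)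
        exact ⟨t', ht', by rw [hts, replExt_right hne]⟩
  · rw [FAtom.sat_mapTerms _ _ _ (replExt_const hs he)] at hθ
    have := C.rel_of_sat_body I (fun d hdP => (hP.of_mem_defAtoms hdP).2.rel_of_sat) htrans
      hr hb hhd hfront _ hθ
    rwa [FTerm.eval_comp_var hs, FTerm.eval_comp_var he, replExt_left, replExt_right hne] at this

lemma soundDefAtom_of_rep_body (hP : SoundDefs I plus tp P)
    (htrans : ∀ a b c : I.Dom, I.rel n [a, b] → I.rel n [b, c] → I.rel n [a, c])
    {r : ERule} (hr : r.sat I) {p : ℕ} {u v : FTerm} (hb : r.body = [⟨p, [u, v]⟩])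
    (hhd : hd ∈ r.head) (hfront : ∀ t ∈ hd.args, ∃ w, t = .var w ∧ FTerm.var w ∈ [u, v])
    (hs : ∃ w, C.pt C.s = .var w) (he : ∃ w, C.pt C.e = .var w)
    {R : PRule} (hpb : R.pbody = .rep p u v) :
    ∀ a ∈ newAtomsFor P R σ (C.pt C.s) (C.pt C.e), SoundDefAtom I plus n a := by
  have hshape : ∀ d ∈ defAtoms P n, d.HasSpecialTerms :=
    fun d hdP => (hP.of_mem_defAtoms hdP).2.hasSpecialTerms
  have hne := C.start_ne_stop
  obtain ⟨w₀, hw₀⟩ := hs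
  obtain ⟨w₁, hw₁⟩ := he
  have hw : w₀ ≠ w₁ := fun h => hne (by rw [hw₀, hw₁, h])
  let θ' : (ℕ → I.Dom) → ℕ → I.Dom := fun θ x => if x = w₀ then θ 0 else θ 1
  have hcore : ∀ θ, I.rel p [(u.subst σ).eval I (θ' θ), (v.subst σ).eval I (θ' θ)] →
      I.rel n [θ 0, θ 1] := fun θ h => by
    simpa [hw₀, hw₁, θ', hw.symm] using C.rel_of_sat_body I
      (fun d hdP => (hP.of_mem_defAtoms hdP).2.rel_of_sat) htrans hr hb hhd hfront _ h
  have hmem : ∀ x, x = C.pt C.s ∨ x = C.pt C.e → x = u.subst σ ∨ x = v.subst σ := fun x hx => by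
    obtain ⟨t, ht, rfl⟩ := C.exists_mem_body_subst_eq hshape (b := ⟨p, [u, v]⟩) hfront hx
    rcases List.mem_pair.1 ht with rfl | rfl <;> simp
  simp only [newAtomsFor, hpb]
  rcases hmem _ (Or.inl rfl) with hu | hu <;> rcases hmem _ (Or.inr rfl) with hv | hv
  · exact absurd (hu.trans hv.symm) hne
  · rw [if_pos ⟨by rw [← hu, replExt_left], by rw [← hv, replExt_right hne]⟩]
    intro a ha
    have ha' := (hP.of_mem_defAtoms ha).2
    refine ⟨ha'.pred_ne_plus, ha'.hasSpecialTerms, fun θ hθ => hcore θ ?_⟩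
    simpa [← hu, ← hv, hw₀, hw₁, θ', hw.symm] using ha'.rel_of_sat θ hθ
  · rw [if_neg fun h => by simp [← hv, replExt_right hne] at h]
    intro a ha
    obtain ⟨d, hd, rfl⟩ := List.mem_map.1 ha
    have hd' := (hP.of_mem_defAtoms hd).2
    refine ⟨hd'.pred_ne_plus, hd'.hasSpecialTerms.mapTerms_swap01, fun θ hθ => hcore θ ?_⟩
    rw [sat_mapTerms_swap01] at hθ
    simpa [← hu, ← hv, hw₀, hw₁, θ', hw.symm] using hd'.rel_of_sat _ hθ
  · exact absurd (hu.trans hv.symm) hne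

end ChainUnifier

section Saturation

variable {I : Interp} {plus : ℕ → ℕ} {tp : List ℕ} {RL RT : List ERule}

lemma soundDefs_initDefs (hplusR : ∀ q, plus q ∉ rulesPreds (RL ++ RT))
    (htp : transPredsOf RT tp) : SoundDefs I plus tp (initDefs tp) := by
  intro pd hpd
  obtain ⟨p, hp, rfl⟩ := List.mem_map.1 hpd
  refine ⟨hp, ?_⟩
  simp only [List.mem_singleton, forall_eq]
  obtain ⟨r, hr, x, y, z, -, -, -, hbody, -⟩ := (htp p).1 hp
  refine ⟨fun q hq => hplusR q ⟨r, List.mem_append_right _ hr, ⟨p, [.var x, .var y]⟩,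
    by simp [hbody], hq⟩, fun t => by simp, fun θ h => h⟩

lemma SoundDefs.of_defStep
    (hRL : ∀ r ∈ RL, isLinearRule r) (hplusR : ∀ q, plus q ∉ rulesPreds (RL ++ RT))
    (hRLsat : ∀ r ∈ RL, r.sat I) (hRTsat : ∀ r ∈ RT, r.sat I) (htp : transPredsOf RT tp)
    {Pf : PDefs} (hclose : ∀ P', DefStep (RL.map (toPRule tp)) Pf P' →
      ∀ k, ∀ a ∈ defAtoms P' k, ∃ b ∈ defAtoms Pf k, isoDefAtom a b)
    {P P' : PDefs} (hsub : ∀ k, (defAtoms P k).Sublist (defAtoms Pf k))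
    (hP : SoundDefs I plus tp P) (hstep : DefStep (RL.map (toPRule tp)) P P') :
    SoundDefs I plus tp P' := by
  obtain ⟨n, R, hR, hrw⟩ := hstep
  obtain ⟨σ, us, ue, h, rfl⟩ := isDefRewriting_iff.1 hrw
  obtain ⟨r, hr, rfl⟩ := List.mem_map.1 hR
  obtain ⟨hd, hhd, C, rfl, rfl, hprot, hs, he⟩ := h.exists_chainUnifier
  have hshape : ∀ d ∈ defAtoms P n, d.HasSpecialTerms :=
    fun d hdP => (hP.of_mem_defAtoms hdP).2.hasSpecialTerms
  have hRc := pruleNoConst_toPRule (tp := tp) (hRL r hr)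
  have hfront := C.frontier hshape hRc hhd hprot
  have hhdr : hd ∈ r.head := by simp [← toPRule_head tp r, hhd]
  obtain ⟨d, hdP, -⟩ := C.slot C.s le_rfl C.s_lt_e
  have htrans := rel_trans_of_transPredsOf hRTsat htp (hP.of_mem_defAtoms hdP).1
  refine hP.updateDef ?_
  rcases toPRule_pbody (tp := tp) (hRL r hr) with ⟨b, hb, hpb⟩ | ⟨p, u, v, hb, -, hpb⟩
  · simp only [hpb, PAtom.terms] at hfront
    have hbody := h.subst_mem_of_saturated hclose hsub (fun d hdP t ht => by
      rcases (hshape d hdP t).1 ht with rfl | rfl <;> exact ⟨_, rfl⟩) hR hRc hpb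
    simp only [newAtomsFor, hpb, List.mem_singleton, forall_eq]
    exact C.soundDefAtom_of_atom_body hP htrans (hRLsat r hr) hb hhdr
      (fun q hq => hplusR q ⟨r, List.mem_append_left _ hr, b, by simp [hb], hq⟩) hfront hbody hs he
  · simp only [hpb, PAtom.terms] at hfront
    exact C.soundDefAtom_of_rep_body hP htrans (hRLsat r hr) hb hhdr hfront hs he hpb

lemma defAtoms_sublist_of_reflTransGen {RLp : List PRule} {P P' : PDefs}
    (h : Relation.ReflTransGen (DefStep RLp) P P') (k : ℕ) :
    (defAtoms P k).Sublist (defAtoms P' k) := by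
  induction h with
  | refl => exact List.Sublist.refl _
  | tail _ hstep ih =>
    obtain ⟨n, R, -, hrw⟩ := hstep
    obtain ⟨σ, us, ue, -, rfl⟩ := isDefRewriting_iff.1 hrw
    exact ih.trans (defAtoms_sublist_updateDef _ _ _ k)

lemma soundDefs_of_isSaturatedDefs
    (hRL : ∀ r ∈ RL, isLinearRule r) (hplusR : ∀ q, plus q ∉ rulesPreds (RL ++ RT))
    (hRLsat : ∀ r ∈ RL, r.sat I) (hRTsat : ∀ r ∈ RT, r.sat I) (htp : transPredsOf RT tp)
    {Pf : PDefs} (hPf : IsSaturatedDefs tp (RL.map (toPRule tp)) Pf) :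
    SoundDefs I plus tp Pf := by
  obtain ⟨hreach, hclose⟩ := hPf
  suffices ∀ P, Relation.ReflTransGen (DefStep (RL.map (toPRule tp))) (initDefs tp) P →
      Relation.ReflTransGen (DefStep (RL.map (toPRule tp))) P Pf → SoundDefs I plus tp P from
    this Pf hreach .refl
  intro P hP
  induction hP with
  | refl => exact fun _ => soundDefs_initDefs hplusR htp
  | tail _ hstep ih =>
    intro hPf
    have hPf' := Relation.ReflTransGen.head hstep hPf
    exact (ih hPf').of_defStep hRL hplusR hRLsat hRTsat htp hclose
      (defAtoms_sublist_of_reflTransGen hPf') hstep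

end Saturation

def plusInterp (I : Interp) (plus : ℕ → ℕ) : Interp where
  Dom := I.Dom
  inh := I.inh
  rel q l := (∃ p x y, q = plus p ∧ l = [x, y] ∧ I.rel p [x, y]) ∨ (q ∉ Set.range plus ∧ I.rel q l)
  cst := I.cst

section PlusInterp

variable {I : Interp} {plus : ℕ → ℕ}

lemma FTerm.eval_plusInterp (ν : ℕ → (plusInterp I plus).Dom) :
    FTerm.eval (plusInterp I plus) ν = FTerm.eval I ν := by
  funext t
  cases t <;> rfl

lemma plusInterp_rel_plus (hinj : Function.Injective plus) (p : ℕ)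
    (l : List (plusInterp I plus).Dom) :
    (plusInterp I plus).rel (plus p) l ↔ ∃ x y, l = [x, y] ∧ I.rel p [x, y] := by
  simp [plusInterp, hinj.eq_iff]

lemma plusInterp_rel_of_notMem_range {q : ℕ} (hq : q ∉ Set.range plus)
    (l : List (plusInterp I plus).Dom) :
    (plusInterp I plus).rel q l ↔ I.rel q l := by
  simp only [plusInterp, hq, not_false_eq_true, true_and, or_iff_right_iff_imp]
  rintro ⟨p, x, y, rfl, -⟩
  exact absurd ⟨p, rfl⟩ hq

lemma FAtom.sat_plusInterp_iff {a : FAtom} (ha : ∀ q, a.pred ≠ plus q)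
    (ν : ℕ → (plusInterp I plus).Dom) :
    a.sat (plusInterp I plus) ν ↔ a.sat I ν := by
  simp only [FAtom.sat, FTerm.eval_plusInterp]
  exact plusInterp_rel_of_notMem_range (fun ⟨q, hq⟩ => ha q hq.symm) _

lemma satFacts_plusInterp {F : List FAtom} (hF : ∀ q, plus q ∉ atomsPreds F)
    (h : satFacts I F) : satFacts (plusInterp I plus) F :=
  fun ν a ha => (FAtom.sat_plusInterp_iff (fun q hq => hF q ⟨a, ha, hq⟩) ν).2 (h ν a ha)

lemma sat_datalogOfDefs {tp : List ℕ} {P : PDefs} (hinj : Function.Injective plus)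
    (hP : SoundDefs I plus tp P)
    (htrans : ∀ k ∈ tp, ∀ a b c : I.Dom, I.rel k [a, b] → I.rel k [b, c] → I.rel k [a, c]) :
    ∀ r ∈ datalogOfDefs plus P, r.sat (plusInterp I plus) := by
  intro r hr
  obtain ⟨⟨k, l⟩, hkl, hr⟩ := List.mem_flatMap.1 hr
  obtain ⟨hk, hl⟩ := hP _ hkl
  refine ERule.sat_of_forall fun ν hbody => ?_
  rcases List.mem_cons.1 hr with rfl | hr
  · simp only [transRule, List.mem_cons, List.not_mem_nil, or_false, forall_eq_or_imp,
      forall_eq, FAtom.sat, List.map_cons, List.map_nil,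
      FTerm.eval_var, plusInterp_rel_plus hinj, List.cons.injEq, and_true,
      existsAndEq, true_and] at hbody ⊢
    exact htrans k hk _ _ _ hbody.1 hbody.2
  · obtain ⟨a, ha, rfl⟩ := List.mem_map.1 hr
    simp only [List.mem_singleton, forall_eq] at hbody ⊢
    have := (hl a ha).rel_of_sat ν ((FAtom.sat_plusInterp_iff (hl a ha).pred_ne_plus ν).1 hbody)
    simpa [FAtom.sat, plusInterp_rel_plus hinj] using this

lemma satCQ_of_satCQ_toPlusCQ {tp : List ℕ} {Q : List FAtom} (hinj : Function.Injective plus)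
    (hQ : ∀ q, plus q ∉ atomsPreds Q) (h : satCQ (plusInterp I plus) (toPlusCQ plus tp Q)) :
    satCQ I Q := by
  obtain ⟨ν, hν⟩ := h
  refine ⟨ν, fun a ha => ?_⟩
  have hsat := hν _ (List.mem_map_of_mem ha)
  by_cases hp : a.pred ∈ tp
  · rw [if_pos hp] at hsat
    simp only [FAtom.sat, FTerm.eval_plusInterp] at hsat
    obtain ⟨x, y, hl, hxy⟩ := (plusInterp_rel_plus hinj _ _).1 hsat
    exact (congrArg (I.rel a.pred) hl).mpr hxy
  · rw [if_neg hp] at hsat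
    exact (FAtom.sat_plusInterp_iff (fun q hq => hQ q ⟨a, ha, hq⟩) ν).1 hsat

end PlusInterp

theorem internal_rewriting_sound_general
    (RL RT : List ERule)
    (hRL : ∀ r ∈ RL, isLinearRule r)
    (tp : List ℕ) (htp : transPredsOf RT tp)
    (plus : ℕ → ℕ) (hplusinj : Function.Injective plus)
    (hplusR : ∀ q, plus q ∉ rulesPreds (RL ++ RT))
    (Pf : PDefs) (hPf : IsSaturatedDefs tp (RL.map (toPRule tp)) Pf)
    (Q : List FAtom) (hQp : ∀ q, plus q ∉ atomsPreds Q)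
    (F : List FAtom) (hFp : ∀ q, plus q ∉ atomsPreds F) :
    entails F (datalogOfDefs plus Pf) (toPlusCQ plus tp Q) → entails F (RL ++ RT) Q := by
  intro hent I hF hR
  have hRL' : ∀ r ∈ RL, r.sat I := fun r hr => hR r (List.mem_append_left _ hr)
  have hRT' : ∀ r ∈ RT, r.sat I := fun r hr => hR r (List.mem_append_right _ hr)
  have hPf' : SoundDefs I plus tp Pf := soundDefs_of_isSaturatedDefs hRL hplusR hRL' hRT' htp hPf
  exact satCQ_of_satCQ_toPlusCQ hplusinj hQp (hent _ (satFacts_plusInterp hFp hF)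
    (sat_datalogOfDefs hplusinj hPf' fun k hk => rel_trans_of_transPredsOf hRT' htp hk))

/-- Soundness of the internal rewriting step: let `RL ∪ RT` be a
linear+trans rule set, `Pf` the set of pattern definitions computed by Step 3 of the
algorithm and `Π_P = datalogOfDefs plus Pf` its Datalog translation.  For every CQ `Q`
over the original vocabulary and every fact base `F`:
if `F, Π_P ⊨ Q⁺⁺` then `F, RL ∪ RT ⊨ Q`. -/
theorem internal_rewriting_sound
    (RL RT : List ERule)
    (hRL : ∀ r ∈ RL, isLinearRule r) (hRT : ∀ r ∈ RT, isTransitivityRule r)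
    (tp : List ℕ) (htp : transPredsOf RT tp)
    (plus : ℕ → ℕ) (hplusinj : Function.Injective plus)
    (hplusR : ∀ q, plus q ∉ rulesPreds (RL ++ RT))
    (Pf : PDefs) (hPf : IsSaturatedDefs tp (RL.map (toPRule tp)) Pf)
    (Q : List FAtom) (hQp : ∀ q, plus q ∉ atomsPreds Q)
    (F : List FAtom) (hF : isFactBase F) (hFp : ∀ q, plus q ∉ atomsPreds F) :
    entails F (datalogOfDefs plus Pf) (toPlusCQ plus tp Q) → entails F (RL ++ RT) Q :=
  internal_rewriting_sound_general RL RT hRL tp htp plus hplusinj hplusR Pf hPf Q hQp F hFp
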